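/- arXiv:1801.06013 — 10 statements merged into one kernel-verified Lean document; each statement's English description precedes it below -/
import Mathlib

section
/- In a symmetric moment problem, the coefficients $u_{n,k}$ defined by $x^n/(b_0 b_1 \cdots b_{n-1}) = \sum_{k=0}^{[n/2]} u_{n,k} P_{n-2k}(x)$ satisfy the recurrence $u_{n+1,k} = \frac{b_{n-2k}}{b_n} u_{n,k} + \frac{b_{n+1-2k}}{b_n} u_{n,k-1}$ for all $n, k \geq 0$ (with $u_{n,k}=0$ for $k>[n/2]$ or $k<0$ and $b_n=0$ for $n<0$), and in particular all $u_{n,k} \geq 0$. -/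
/-!
A three-term recurrence with nonzero `b n` forces `deg P n = n`, so the `P n` are linearly
independent and expansions in them are unique. Multiplying the expansion of `x ^ n` by `x` and
applying the recurrence to each `P (n - 2k)` produces an expansion of
`b n * x ^ (n + 1) / (b 0 ⋯ b n)`, whose coefficients must then be `b n * u (n + 1) k`.
Nonnegativity follows by induction on `n`, starting from `u 0 0 = 1`.
-/

open Polynomial

section UniqueExpansion

variable {R : Type*} [CommRing R] [IsDomain R] {P : ℕ → R[X]}

theorem eq_zero_of_sum_C_mul_eq_zero (hdeg : ∀ i, (P i).degree = i) {s : Finset ℕ}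
    {c : ℕ → R} (h : ∑ i ∈ s, C (c i) * P i = 0) : ∀ i ∈ s, c i = 0 := by
  have hterm : ∀ i, c i ≠ 0 → (C (c i) * P i).degree = i := fun i hi => by
    rw [degree_C_mul hi, hdeg]
  have hsup := degree_sum_eq_of_disjoint (fun i => C (c i) * P i) s fun i hi j hj hij => by
    simp only [Function.onFun, Function.comp_apply]
    rw [hterm i fun h0 => hi.2 (by simp [h0]), hterm j fun h0 => hj.2 (by simp [h0])]
    exact_mod_cast hij
  intro i hi
  by_contra hci
  have hle : (i : WithBot ℕ) ≤ ⊥ := by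
    rw [← degree_zero (R := R), ← h, hsup, ← hterm i hci]
    exact Finset.le_sup (f := fun i => (C (c i) * P i).degree) hi
  exact WithBot.coe_ne_bot (le_bot_iff.mp hle)

theorem eq_of_sum_C_mul_sub_two_mul_eq (hdeg : ∀ i, (P i).degree = i) {m : ℕ} {c d : ℕ → R}
    (h : ∑ k ∈ Finset.range (m / 2 + 1), C (c k) * P (m - 2 * k) =
      ∑ k ∈ Finset.range (m / 2 + 1), C (d k) * P (m - 2 * k)) :
    ∀ k ≤ m / 2, c k = d k := by
  have hinj : Set.InjOn (fun k => m - 2 * k) (Finset.range (m / 2 + 1)) := by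
    intro k hk l hl hkl
    simp only [Finset.coe_range, Set.mem_Iio] at hk hl
    simp only at hkl
    omega
  have hzero : ∑ i ∈ (Finset.range (m / 2 + 1)).image (fun k => m - 2 * k),
      C (c ((m - i) / 2) - d ((m - i) / 2)) * P i = 0 := by
    rw [Finset.sum_image hinj, ← sub_eq_zero.mpr h, ← Finset.sum_sub_distrib]
    refine Finset.sum_congr rfl fun k hk => ?_
    have hhalf : (m - (m - 2 * k)) / 2 = k := by
      have := Finset.mem_range.mp hk
      omega
    rw [hhalf, C_sub, sub_mul]
  intro k hk
  have hmem : m - 2 * k ∈ (Finset.range (m / 2 + 1)).image (fun k => m - 2 * k) :=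
    Finset.mem_image_of_mem _ (Finset.mem_range.mpr (by omega))
  have := eq_zero_of_sum_C_mul_eq_zero hdeg hzero _ hmem
  rwa [show (m - (m - 2 * k)) / 2 = k by omega, sub_eq_zero] at this

end UniqueExpansion

section ThreeTerm

variable {R : Type*} [CommRing R] {b : ℕ → R} {P : ℕ → R[X]}

theorem degree_eq_of_three_term [IsDomain R] (hb : ∀ n, b n ≠ 0) (hP0 : P 0 = 1)
    (hrec : ∀ n : ℕ, X * P n = C (b n) * P (n + 1) +
      C (if n = 0 then 0 else b (n - 1)) * P (n - 1)) (n : ℕ) :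
    (P n).degree = n := by
  induction n using Nat.twoStepInduction with
  | zero => simp [hP0]
  | one =>
    have h := hrec 0
    simp only [hP0, ↓reduceIte, map_zero, add_zero, mul_one] at h
    rw [← degree_C_mul (hb 0), ← h, degree_X, Nat.cast_one]
  | more n ih₀ ih₁ =>
    have h : C (b (n + 1)) * P (n + 2) = X * P (n + 1) - C (b n) * P n := by
      rw [hrec (n + 1)]
      simp
    have hlead : (X * P (n + 1)).degree = ↑(n + 2) := by
      rw [degree_mul, degree_X, ih₁]
      norm_cast
      omega
    have hlow : (C (b n) * P n).degree < (X * P (n + 1)).degree := by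
      rw [degree_C_mul (hb n), ih₀, hlead]
      exact_mod_cast (by omega : n < n + 2)
    rw [← degree_C_mul (hb (n + 1)), h, degree_sub_eq_left_of_degree_lt hlow, hlead]

theorem X_mul_sum_C_mul_sub_two_mul
    (hrec : ∀ n : ℕ, X * P n = C (b n) * P (n + 1) +
      C (if n = 0 then 0 else b (n - 1)) * P (n - 1)) (n : ℕ) (v : ℕ → R) :
    X * ∑ k ∈ Finset.range (n / 2 + 1), C (v k) * P (n - 2 * k) =
      ∑ k ∈ Finset.range ((n + 1) / 2 + 1),
        C ((if 2 * k ≤ n then b (n - 2 * k) else 0) * v k +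
          (if 2 * k ≤ n + 1 then b (n + 1 - 2 * k) else 0) *
            (if k = 0 then 0 else v (k - 1))) * P (n + 1 - 2 * k) := by
  set f : ℕ → R[X] := fun k =>
    C ((if 2 * k ≤ n then b (n - 2 * k) else 0) * v k) * P (n + 1 - 2 * k)
  set g : ℕ → R[X] := fun k =>
    C ((if 2 * k ≤ n + 1 then b (n + 1 - 2 * k) else 0) *
      (if k = 0 then 0 else v (k - 1))) * P (n + 1 - 2 * k)
  have hsplit : ∀ k ≤ n / 2, X * (C (v k) * P (n - 2 * k)) = f k + g (k + 1) := by
    intro k hk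
    rw [mul_left_comm, hrec, mul_add]
    congr 1
    · simp only [f, if_pos (by omega : 2 * k ≤ n), show n - 2 * k + 1 = n + 1 - 2 * k by omega,
        C_mul]
      ring
    · by_cases h0 : n - 2 * k = 0
      · simp [g, h0, show ¬2 * (k + 1) ≤ n + 1 by omega]
      · simp only [g, if_neg h0, if_pos (by omega : 2 * (k + 1) ≤ n + 1), Nat.add_sub_cancel,
          show n - 2 * k - 1 = n + 1 - 2 * (k + 1) by omega, C_mul, add_eq_zero, one_ne_zero,
          and_false, if_false]
        ring
  have hf : f (n / 2 + 1) = 0 := by simp [f, show ¬2 * (n / 2 + 1) ≤ n by omega]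
  have hg : g 0 = 0 := by simp [g]
  calc X * ∑ k ∈ Finset.range (n / 2 + 1), C (v k) * P (n - 2 * k)
      = ∑ k ∈ Finset.range (n / 2 + 1), (f k + g (k + 1)) := by
        rw [Finset.mul_sum]
        exact Finset.sum_congr rfl fun k hk => hsplit k (by simpa [Nat.lt_succ_iff] using hk)
    _ = ∑ k ∈ Finset.range (n / 2 + 2), (f k + g k) := by
        rw [Finset.sum_add_distrib, Finset.sum_add_distrib, Finset.sum_range_succ f (n / 2 + 1),
          Finset.sum_range_succ' g (n / 2 + 1), hf, hg, add_zero, add_zero]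
    _ = ∑ k ∈ Finset.range ((n + 1) / 2 + 1), (f k + g k) := by
        refine (Finset.sum_subset (Finset.range_subset_range.mpr (by omega)) fun k _ hk => ?_).symm
        have hk : ¬2 * k ≤ n + 1 := by
          have := Finset.mem_range.not.mp hk
          omega
        simp [f, g, hk, show ¬2 * k ≤ n by omega]
    _ = _ := by
        simp only [f, g, ← add_mul, ← C_add]

end ThreeTerm

section MomentExpansion

variable {K : Type*} [Field K] {b : ℕ → K} {P : ℕ → K[X]}

theorem mul_coeff_succ_eq_of_expansion (hdeg : ∀ i, (P i).degree = i)
    (hrec : ∀ n : ℕ, X * P n = C (b n) * P (n + 1) +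
      C (if n = 0 then 0 else b (n - 1)) * P (n - 1))
    {u : ℕ → ℕ → K}
    (hexp : ∀ n : ℕ, C (∏ i ∈ Finset.range n, b i)⁻¹ * X ^ n =
      ∑ k ∈ Finset.range (n / 2 + 1), C (u n k) * P (n - 2 * k))
    {n : ℕ} (hbn : b n ≠ 0) : ∀ k ≤ (n + 1) / 2, b n * u (n + 1) k =
      (if 2 * k ≤ n then b (n - 2 * k) else 0) * u n k +
      (if 2 * k ≤ n + 1 then b (n + 1 - 2 * k) else 0) * (if k = 0 then 0 else u n (k - 1)) := by
  intro k hk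
  have hscale : C (b n) * (C (∏ i ∈ Finset.range (n + 1), b i)⁻¹ * X ^ (n + 1)) =
      X * (C (∏ i ∈ Finset.range n, b i)⁻¹ * X ^ n) := by
    rw [Finset.prod_range_succ, mul_inv, ← mul_assoc, ← C_mul, mul_left_comm,
      mul_inv_cancel₀ hbn, mul_one, pow_succ]
    ring
  have hsum : ∑ k ∈ Finset.range ((n + 1) / 2 + 1), C (b n * u (n + 1) k) * P (n + 1 - 2 * k) =
      X * ∑ k ∈ Finset.range (n / 2 + 1), C (u n k) * P (n - 2 * k) := by
    rw [← hexp n, ← hscale, hexp (n + 1), Finset.mul_sum]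
    simp only [C_mul, mul_assoc]
  exact eq_of_sum_C_mul_sub_two_mul_eq hdeg
    (hsum.trans (X_mul_sum_C_mul_sub_two_mul hrec n _)) k hk

end MomentExpansion

/-- for a symmetric moment problem, the coefficients `u n k` defined by
`x^n/(b_0⋯b_{n-1}) = ∑_{k ≤ n/2} u_{n,k} P_{n-2k}` satisfy the recurrence
`u_{n+1,k} = (b_{n-2k}/b_n) u_{n,k} + (b_{n+1-2k}/b_n) u_{n,k-1}`
(with the conventions `u_{n,k} = 0` for `k > ⌊n/2⌋` or `k < 0`, and `b_m = 0` for `m < 0`),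
and all `u_{n,k} ≥ 0`. -/
theorem stmt2 (b : ℕ → ℝ) (P : ℕ → Polynomial ℝ) (u : ℕ → ℕ → ℝ)
    (hb : ∀ n, 0 < b n) (hP0 : P 0 = 1)
    (hrec : ∀ n : ℕ, X * P n = C (b n) * P (n + 1) +
      C (if n = 0 then 0 else b (n - 1)) * P (n - 1))
    (hexp : ∀ n : ℕ, C (∏ i ∈ Finset.range n, b i)⁻¹ * X ^ n =
      ∑ k ∈ Finset.range (n / 2 + 1), C (u n k) * P (n - 2 * k))
    (huz : ∀ n k : ℕ, n / 2 < k → u n k = 0) :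
    (∀ n k : ℕ, u (n + 1) k =
      (if 2 * k ≤ n then b (n - 2 * k) else 0) / b n * u n k +
      (if 2 * k ≤ n + 1 then b (n + 1 - 2 * k) else 0) / b n *
        (if k = 0 then 0 else u n (k - 1))) ∧
    (∀ n k : ℕ, 0 ≤ u n k) := by
  have hbne : ∀ n, b n ≠ 0 := fun n => (hb n).ne'
  have hdeg := degree_eq_of_three_term hbne hP0 hrec
  have hstep : ∀ n k : ℕ, u (n + 1) k =
      (if 2 * k ≤ n then b (n - 2 * k) else 0) / b n * u n k +
      (if 2 * k ≤ n + 1 then b (n + 1 - 2 * k) else 0) / b n *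
        (if k = 0 then 0 else u n (k - 1)) := by
    intro n k
    by_cases hk : k ≤ (n + 1) / 2
    · rw [div_mul_eq_mul_div, div_mul_eq_mul_div, ← add_div, eq_div_iff (hbne n), mul_comm]
      exact mul_coeff_succ_eq_of_expansion hdeg hrec hexp (hbne n) k hk
    · simp [huz (n + 1) k (by omega), show ¬2 * k ≤ n + 1 by omega, show ¬2 * k ≤ n by omega]
  refine ⟨hstep, fun n => ?_⟩
  induction n with
  | zero =>
    have hu00 : u 0 0 = 1 := C_injective (by simpa [hP0] using (hexp 0).symm)
    rintro (_ | k)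
    · exact hu00 ▸ zero_le_one
    · exact (huz 0 (k + 1) (by omega)).ge
  | succ n ih =>
    intro k
    rw [hstep]
    have hcoef : ∀ (p : Prop) [Decidable p] (m : ℕ), 0 ≤ (if p then b m else 0) / b n :=
      fun _ _ m => div_nonneg (ite_nonneg (hb m).le le_rfl) (hb n).le
    exact add_nonneg (mul_nonneg (hcoef _ _) (ih k))
      (mul_nonneg (hcoef _ _) (ite_nonneg le_rfl (ih _)))
end

section
/- If $(b_n)$ and $(\tilde{b}_n)$ are positive sequences with $b_{n-1}/b_n \leq \tilde{b}_{n-1}/\tilde{b}_n$ for all $n \geq 1$, then $U_n \leq \tilde{U}_n$ for all $n$, where $U_n = s_{2n}/(b_0^2\cdots b_{n-1}^2)$ and $\tilde U_n$ is defined analogously. -/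
/-- The Jacobi operator with zero diagonal and off-diagonal entries `b n`. -/
noncomputable def jacobiOp (b : ℕ → ℝ) (f : ℕ → ℝ) : ℕ → ℝ :=
  fun n => b n * f (n + 1) + (if n = 0 then 0 else b (n - 1) * f (n - 1))

/-- The moments of the symmetric moment problem: `s_n = (Jⁿ δ₀, δ₀)`. -/
noncomputable def moment (b : ℕ → ℝ) (n : ℕ) : ℝ :=
  ((jacobiOp b)^[n] (fun k => if k = 0 then 1 else 0)) 0

/-!
Write `s_{2n} = ‖Jⁿ δ₀‖²`, using that `J` is symmetric, and divide `Jⁿ δ₀` by `b₀ ⋯ b_{n-1}`.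
The resulting vectors satisfy a recurrence with the nonnegative coefficients `b_j / b_n`
(`j ≤ n` on the support), and the hypothesis says exactly that `n ↦ b̃_n / b_n` is antitone,
i.e. that every such coefficient for `b` is at most the one for `b̃`. By induction the
normalized vectors for `b` are dominated entrywise by those for `b̃`, and so are the sums
of their squares.
-/

open Finset

noncomputable def jacobiVec (b : ℕ → ℝ) (n : ℕ) : ℕ → ℝ :=
  (jacobiOp b)^[n] (fun k => if k = 0 then 1 else 0)

section JacobiVec

variable {b : ℕ → ℝ}

lemma jacobiVec_zero (m : ℕ) : jacobiVec b 0 m = if m = 0 then 1 else 0 := rfl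

lemma jacobiVec_succ (n : ℕ) : jacobiVec b (n + 1) = jacobiOp b (jacobiVec b n) :=
  Function.iterate_succ_apply' _ _ _

lemma moment_eq_jacobiVec (n : ℕ) : moment b n = jacobiVec b n 0 := rfl

lemma jacobiVec_eq_zero_of_lt {n m : ℕ} (h : n < m) : jacobiVec b n m = 0 := by
  induction n generalizing m with
  | zero => simp [jacobiVec_zero, h.ne']
  | succ n ih =>
    obtain ⟨m, rfl⟩ : ∃ k, m = k + 1 := ⟨m - 1, by omega⟩
    simp [jacobiVec_succ, jacobiOp, ih (by omega : n < m + 1 + 1), ih (by omega : n < m)]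

lemma jacobiVec_nonneg (hb : 0 ≤ b) (n m : ℕ) : 0 ≤ jacobiVec b n m := by
  induction n generalizing m with
  | zero => rw [jacobiVec_zero]; positivity
  | succ n ih =>
    have h₁ := mul_nonneg (hb m) (ih (m + 1))
    have h₂ := mul_nonneg (hb (m - 1)) (ih (m - 1))
    rw [jacobiVec_succ, jacobiOp]
    split_ifs <;> positivity

lemma sum_jacobiOp_mul (f g : ℕ → ℝ) {N : ℕ} (hf : f (N + 1) = 0) :
    ∑ m ∈ range (N + 1), jacobiOp b f m * g m =
      ∑ m ∈ range N, b m * (f (m + 1) * g m + f m * g (m + 1)) := by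
  simp only [jacobiOp, add_mul, sum_add_distrib]
  rw [sum_range_succ, hf, sum_range_succ' (fun m => (if m = 0 then 0 else _) * g m)]
  simp only [mul_zero, zero_mul, add_zero, if_true, Nat.add_one_ne_zero, if_false,
    Nat.add_sub_cancel, mul_add, sum_add_distrib, mul_assoc]

lemma sum_jacobiOp_mul_comm (f g : ℕ → ℝ) {N : ℕ} (hf : f (N + 1) = 0) (hg : g (N + 1) = 0) :
    ∑ m ∈ range (N + 1), jacobiOp b f m * g m = ∑ m ∈ range (N + 1), f m * jacobiOp b g m := by
  simp_rw [mul_comm (f _) (jacobiOp b g _), sum_jacobiOp_mul f g hf, sum_jacobiOp_mul g f hg]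
  refine sum_congr rfl fun m _ => ?_
  ring

lemma jacobiVec_add_apply_zero (a c : ℕ) :
    jacobiVec b (a + c) 0 = ∑ m ∈ range (a + c + 1), jacobiVec b a m * jacobiVec b c m := by
  induction a generalizing c with
  | zero =>
    simp [jacobiVec_zero]
  | succ a ih =>
    rw [show a + 1 + c = a + (c + 1) by omega, ih, show a + (c + 1) + 1 = a + c + 1 + 1 by omega,
      jacobiVec_succ, jacobiVec_succ,
      ← sum_jacobiOp_mul_comm _ _ (jacobiVec_eq_zero_of_lt (by omega))
        (jacobiVec_eq_zero_of_lt (by omega))]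

lemma moment_two_mul (n : ℕ) :
    moment b (2 * n) = ∑ m ∈ range (2 * n + 1), jacobiVec b n m ^ 2 := by
  simp_rw [moment_eq_jacobiVec, two_mul, jacobiVec_add_apply_zero, sq]

end JacobiVec

/-- `scaledJacobiVec b n (n - 2 * k)` is the `u_{n,k}` of the informal statement. -/
noncomputable def scaledJacobiVec (b : ℕ → ℝ) (n : ℕ) : ℕ → ℝ :=
  fun m => jacobiVec b n m / ∏ i ∈ range n, b i

section ScaledJacobiVec

variable {b bt : ℕ → ℝ}

lemma moment_two_mul_div_prod_sq (n : ℕ) :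
    moment b (2 * n) / ∏ i ∈ range n, b i ^ 2 =
      ∑ m ∈ range (2 * n + 1), scaledJacobiVec b n m ^ 2 := by
  simp_rw [moment_two_mul, scaledJacobiVec, div_pow, prod_pow, sum_div]

lemma scaledJacobiVec_succ (n m : ℕ) :
    scaledJacobiVec b (n + 1) m = b m / b n * scaledJacobiVec b n (m + 1) +
      if m = 0 then 0 else b (m - 1) / b n * scaledJacobiVec b n (m - 1) := by
  simp only [scaledJacobiVec, jacobiVec_succ, jacobiOp, prod_range_succ, add_div]
  split_ifs <;> simp only [div_mul_div_comm, mul_comm (b n), zero_div]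

lemma scaledJacobiVec_eq_zero_of_lt {n m : ℕ} (h : n < m) : scaledJacobiVec b n m = 0 := by
  simp [scaledJacobiVec, jacobiVec_eq_zero_of_lt h]

lemma scaledJacobiVec_nonneg (hb : 0 ≤ b) (n m : ℕ) : 0 ≤ scaledJacobiVec b n m :=
  div_nonneg (jacobiVec_nonneg hb n m) (prod_nonneg fun i _ => hb i)

lemma antitone_div_of_ratio_le (hb : ∀ n, 0 < b n) (hbt : ∀ n, 0 < bt n)
    (hratio : ∀ n : ℕ, 1 ≤ n → b (n - 1) / b n ≤ bt (n - 1) / bt n) :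
    Antitone fun n => bt n / b n := by
  refine antitone_nat_of_succ_le fun n => ?_
  have h := hratio (n + 1) le_add_self
  rw [Nat.add_sub_cancel, div_le_div_iff₀ (hb _) (hbt _)] at h
  rw [div_le_div_iff₀ (hb _) (hb _)]
  linarith

lemma div_le_div_of_antitone (hb : ∀ n, 0 < b n) (hbt : ∀ n, 0 < bt n)
    (hanti : Antitone fun n => bt n / b n) {m n : ℕ} (h : m ≤ n) :
    b m / b n ≤ bt m / bt n := by
  have := hanti h
  rw [div_le_div_iff₀ (hb _) (hb _)] at this
  rw [div_le_div_iff₀ (hb _) (hbt _)]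
  linarith

lemma scaledJacobiVec_le (hb : ∀ n, 0 < b n) (hbt : ∀ n, 0 < bt n)
    (hanti : Antitone fun n => bt n / b n) (n m : ℕ) :
    scaledJacobiVec b n m ≤ scaledJacobiVec bt n m := by
  induction n generalizing m with
  | zero => rfl
  | succ n ih =>
    -- a coefficient `b k / b n` only meets a nonzero entry `j ≤ n` when `k ≤ n`
    have term {j k : ℕ} (hjk : j ≤ n → k ≤ n) :
        b k / b n * scaledJacobiVec b n j ≤ bt k / bt n * scaledJacobiVec bt n j := by
      rcases lt_or_ge n j with hj | hj
      · simp [scaledJacobiVec_eq_zero_of_lt hj]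
      · exact mul_le_mul (div_le_div_of_antitone hb hbt hanti (hjk hj)) (ih j)
          (scaledJacobiVec_nonneg (fun i => (hb i).le) n j) (div_pos (hbt k) (hbt n)).le
    rw [scaledJacobiVec_succ, scaledJacobiVec_succ]
    gcongr ?_ + ?_
    · exact term (by omega)
    · split_ifs
      · rfl
      · exact term id

end ScaledJacobiVec

/-- if `b_{n-1}/b_n ≤ b̃_{n-1}/b̃_n` for all `n ≥ 1`, then
`U_n = s_{2n}/(b_0²⋯b_{n-1}²) ≤ Ũ_n`. -/
theorem stmt3 (b bt : ℕ → ℝ) (hb : ∀ n, 0 < b n) (hbt : ∀ n, 0 < bt n)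
    (hratio : ∀ n : ℕ, 1 ≤ n → b (n - 1) / b n ≤ bt (n - 1) / bt n) :
    ∀ n : ℕ, moment b (2 * n) / ∏ i ∈ Finset.range n, (b i) ^ 2 ≤
      moment bt (2 * n) / ∏ i ∈ Finset.range n, (bt i) ^ 2 := by
  intro n
  have hanti := antitone_div_of_ratio_le hb hbt hratio
  rw [moment_two_mul_div_prod_sq, moment_two_mul_div_prod_sq]
  refine sum_le_sum fun m _ => ?_
  exact pow_le_pow_left₀ (scaledJacobiVec_nonneg (fun i => (hb i).le) n m)
    (scaledJacobiVec_le hb hbt hanti n m) 2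
end

section
/- In a symmetric moment problem, the even moments satisfy $s_{2n+2} \geq b_0^2 s_{2n}^{(1)}$, where $s_{2n}^{(1)}$ are the even moments for the shifted sequence $b_n^{(1)} = b_{n+1}$. -/
lemma jacobi_smul (b : ℕ → ℝ) (c : ℝ) (f : ℕ → ℝ) :
    jacobiOp b (fun k => c * f k) = fun k => c * jacobiOp b f k := by
  funext k; simp only [jacobiOp]; split <;> ring

lemma jacobi_iterate_smul (b : ℕ → ℝ) (c : ℝ) (f : ℕ → ℝ) (m : ℕ) :
    (jacobiOp b)^[m] (fun k => c * f k) = fun k => c * (jacobiOp b)^[m] f k := by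
  induction m with
  | zero => rfl
  | succ m ih =>
      rw [Function.iterate_succ_apply', ih, Function.iterate_succ_apply', ← jacobi_smul]

lemma jacobi_nonneg (b : ℕ → ℝ) (hb : ∀ n, 0 < b n) (f : ℕ → ℝ) (hf : ∀ k, 0 ≤ f k) :
    ∀ k, 0 ≤ jacobiOp b f k := by
  intro k
  refine add_nonneg (mul_nonneg (hb k).le (hf _)) ?_
  split
  · exact le_refl 0
  · exact mul_nonneg (hb _).le (hf _)

lemma key (b : ℕ → ℝ) (hb : ∀ n, 0 < b n) (m : ℕ) :
    (∀ k, 0 ≤ (jacobiOp b)^[m] (fun k => if k = 1 then (1:ℝ) else 0) k) ∧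
    (∀ k, (jacobiOp (fun j => b (j+1)))^[m] (fun k => if k = 0 then (1:ℝ) else 0) k ≤
      (jacobiOp b)^[m] (fun k => if k = 1 then (1:ℝ) else 0) (k+1)) := by
  induction m with
  | zero =>
      constructor
      · intro k; dsimp; split <;> norm_num
      · intro k; rcases k with _ | k <;> simp
  | succ m ih =>
      obtain ⟨h1, h2⟩ := ih
      constructor
      · intro k
        rw [Function.iterate_succ_apply']
        exact jacobi_nonneg b hb _ h1 k
      · intro k
        rw [Function.iterate_succ_apply', Function.iterate_succ_apply']
        set f := (jacobiOp b)^[m] (fun k => if k = 1 then (1:ℝ) else 0) with hf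
        set g := (jacobiOp (fun j => b (j+1)))^[m] (fun k => if k = 0 then (1:ℝ) else 0) with hg
        show jacobiOp (fun j => b (j+1)) g k ≤ jacobiOp b f (k+1)
        simp only [jacobiOp]
        rcases k with _ | j
        · simp only [if_pos rfl, Nat.add_sub_cancel, if_neg (Nat.succ_ne_zero 0), if_true]
          have A := h2 1
          have B := mul_nonneg (hb 0).le (h1 0)
          have C := mul_le_mul_of_nonneg_left A (hb 1).le
          show b 1 * g 1 + 0 ≤ b 1 * f 2 + b 0 * f 0
          linarith
        · have hne : j + 1 ≠ 0 := Nat.succ_ne_zero j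
          have hne2 : j + 2 ≠ 0 := Nat.succ_ne_zero _
          simp only [if_neg hne, if_neg hne2, Nat.add_sub_cancel]
          have A := mul_le_mul_of_nonneg_left (h2 (j+2)) (hb (j+2)).le
          have B := mul_le_mul_of_nonneg_left (h2 j) (hb (j+1)).le
          show b (j+2) * g (j+2) + b (j+1) * g j ≤ b (j+2) * f (j+3) + b (j+1) * f (j+1)
          linarith

/-- `s_{2n+2} ≥ b_0² s_{2n}^{(1)}`, where `s^{(1)}` are the moments
for the shifted sequence `b^{(1)}_n = b_{n+1}`. -/
theorem stmt4 (b : ℕ → ℝ) (hb : ∀ n, 0 < b n) :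
    ∀ n : ℕ, (b 0) ^ 2 * moment (fun k => b (k + 1)) (2 * n) ≤ moment b (2 * n + 2) := by
  intro n
  have h0 : (jacobiOp b) (fun k => if k = 0 then (1:ℝ) else 0) =
      fun k => b 0 * (if k = 1 then (1:ℝ) else 0) := by
    funext k
    simp only [jacobiOp]
    rcases k with _ | j
    · simp
    · rcases j with _ | j <;> simp
  have hrw : moment b (2*n+2) =
      b 0 * ((jacobiOp b)^[2*n+1] (fun k => if k = 1 then (1:ℝ) else 0)) 0 := by
    unfold moment
    rw [show 2*n+2 = (2*n+1)+1 by ring, Function.iterate_succ_apply, h0,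
      jacobi_iterate_smul]
  rw [hrw, Function.iterate_succ_apply']
  set F := (jacobiOp b)^[2*n] (fun k => if k = 1 then (1:ℝ) else 0) with hF
  have hval : jacobiOp b F 0 = b 0 * F 1 := by
    simp [jacobiOp]
  rw [hval]
  obtain ⟨h1, h2⟩ := key b hb (2*n)
  have hm : moment (fun k => b (k + 1)) (2*n) ≤ F 1 := h2 0
  have hb0 := (hb 0).le
  nlinarith [mul_le_mul_of_nonneg_left hm (mul_nonneg hb0 hb0)]
end

section
/- Assume $(b_n)$ is log-concave ($b_n^2 \geq b_{n-1}b_{n+1}$ for $n\geq 1$) and strictly increasing, and let $q_n = b_{n-1}/b_n$. Then $0 < q_n \leq q_{n+1} < 1$, and the coefficients satisfy $u_{n,k} \leq q_n^{k^2}/(q_n^2; q_n^2)_k$ for all $n \geq 1$, $k \geq 0$, where $(z;q)_k = \prod_{j=0}^{k-1}(1-zq^j)$. -/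
/-!
Log-concavity says that the ratios `r n = b n / b (n+1)` increase, so `b m / b (m+d)`, a product
of `d` consecutive ratios, is at most `r (m+d) ^ d`. In the recurrence for `u_{n+1,k+1}` the two
coefficients are `b (n-2k-2) / b n` and `b (n-2k-1) / b n`, hence at most `q^(2k+2)` and
`q^(2k+1)` with `q = r n`. The bound `qBound q k = q^(k²)/(q²;q²)_k` satisfies exactly
`qBound q (k+1) = q^(2k+2) qBound q (k+1) + q^(2k+1) qBound q k` and increases with `q`, so the
estimate `u_{n+1,k} ≤ qBound (r n) k` propagates by induction on `n`.
-/

/-- The coefficients `u_{n,k}` of `x^n/(b_0⋯b_{n-1})` in the basis `P_{n-2k}`,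
defined via their recurrence (`b_m = 0` for `m < 0`, `u_{n,k} = 0` for `k < 0`). -/
noncomputable def usec (b : ℕ → ℝ) : ℕ → ℕ → ℝ
  | 0, 0 => 1
  | 0, _ + 1 => 0
  | n + 1, 0 => usec b n 0
  | n + 1, k + 1 =>
      ((if 2 * (k + 1) ≤ n then b (n - 2 * (k + 1)) else 0) * usec b n (k + 1) +
        (if 2 * (k + 1) ≤ n + 1 then b (n + 1 - 2 * (k + 1)) else 0) * usec b n k) / b n

section usec

variable {b : ℕ → ℝ}

lemma usec_zero_right (b : ℕ → ℝ) : ∀ n, usec b n 0 = 1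
  | 0 => rfl
  | n + 1 => by rw [usec]; exact usec_zero_right b n

lemma usec_one_succ (b : ℕ → ℝ) (k : ℕ) : usec b 1 (k + 1) = 0 := by
  rw [usec, if_neg (by omega), if_neg (by omega)]
  simp

lemma usec_nonneg (hb : ∀ n, 0 ≤ b n) : ∀ n k, 0 ≤ usec b n k
  | 0, 0 => zero_le_one
  | 0, k + 1 => le_rfl
  | n + 1, 0 => by rw [usec]; exact usec_nonneg hb n 0
  | n + 1, k + 1 => by
      have hcoef : ∀ (p : Prop) [Decidable p] (m : ℕ), 0 ≤ if p then b m else 0 := by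
        intro p _ m
        split_ifs
        exacts [hb m, le_rfl]
      rw [usec]
      exact div_nonneg (add_nonneg (mul_nonneg (hcoef _ _) (usec_nonneg hb n _))
        (mul_nonneg (hcoef _ _) (usec_nonneg hb n _))) (hb n)

lemma usec_succ_succ_le (hb : ∀ n, 0 < b n) {n : ℕ} {q : ℝ} (hq : 0 ≤ q)
    (hratio : ∀ m d, m + d = n → b m / b n ≤ q ^ d) (k : ℕ) :
    usec b (n + 1) (k + 1) ≤ q ^ (2 * k + 2) * usec b n (k + 1) + q ^ (2 * k + 1) * usec b n k := by
  have hcoef : ∀ (p : Prop) [Decidable p] (m d : ℕ), (p → m + d = n) →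
      (if p then b m else 0) / b n ≤ q ^ d := by
    intro p _ m d hmd
    split_ifs with hp
    · exact hratio m d (hmd hp)
    · rw [zero_div]; positivity
  have hu := usec_nonneg (fun m => (hb m).le) n
  rw [usec, add_div, mul_div_right_comm, mul_div_right_comm]
  gcongr
  exacts [hu _, hcoef _ _ _ fun h => by omega, hu _, hcoef _ _ _ fun h => by omega]

end usec

noncomputable def qBound (q : ℝ) (k : ℕ) : ℝ :=
  q ^ (k ^ 2) / ∏ j ∈ Finset.range k, (1 - q ^ (2 * j + 2))

section qBound

variable {q q' : ℝ}

lemma prod_one_sub_pow_pos (h0 : 0 ≤ q) (h1 : q < 1) (k : ℕ) :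
    0 < ∏ j ∈ Finset.range k, (1 - q ^ (2 * j + 2)) :=
  Finset.prod_pos fun j _ => sub_pos.2 (pow_lt_one₀ h0 h1 (by omega))

@[simp]
lemma qBound_zero (q : ℝ) : qBound q 0 = 1 := by
  simp [qBound]

lemma qBound_pos (h0 : 0 < q) (h1 : q < 1) (k : ℕ) : 0 < qBound q k :=
  div_pos (pow_pos h0 _) (prod_one_sub_pow_pos h0.le h1 k)

lemma qBound_mono (h0 : 0 ≤ q) (hqq' : q ≤ q') (h1 : q' < 1) (k : ℕ) :
    qBound q k ≤ qBound q' k := by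
  have h0' : 0 ≤ q' := h0.trans hqq'
  apply div_le_div₀ (by positivity) (by gcongr) (prod_one_sub_pow_pos h0' h1 k)
  refine Finset.prod_le_prod (fun j _ => (sub_pos.2 (pow_lt_one₀ h0' h1 (by omega))).le)
    fun j _ => ?_
  gcongr

lemma qBound_succ (h0 : 0 ≤ q) (h1 : q < 1) (k : ℕ) :
    q ^ (2 * k + 2) * qBound q (k + 1) + q ^ (2 * k + 1) * qBound q k = qBound q (k + 1) := by
  have hD := (prod_one_sub_pow_pos h0 h1 k).ne'
  have hlast : (1 : ℝ) - q ^ (2 * k + 2) ≠ 0 := (sub_pos.2 (pow_lt_one₀ h0 h1 (by omega))).ne'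
  have hstep : q ^ (2 * k + 1) * qBound q k = (1 - q ^ (2 * k + 2)) * qBound q (k + 1) := by
    rw [qBound, qBound, Finset.prod_range_succ,
      show (k + 1) ^ 2 = k ^ 2 + (2 * k + 1) by ring, pow_add]
    field_simp
    ring
  linear_combination hstep

end qBound

theorem usec_le_qBound {b : ℕ → ℝ} (hb : ∀ n, 0 < b n) {q : ℕ → ℝ} (hq0 : ∀ n, 0 < q n)
    (hq : Monotone q) (hq1 : ∀ n, q n < 1) (hratio : ∀ m d, b m / b (m + d) ≤ q (m + d) ^ d) :
    ∀ n k, usec b (n + 1) k ≤ qBound (q n) k := by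
  intro n
  induction n with
  | zero =>
    rintro (_ | k)
    · simp [usec_zero_right]
    · rw [usec_one_succ]
      exact (qBound_pos (hq0 0) (hq1 0) _).le
  | succ n ih =>
    rintro (_ | k)
    · simp [usec_zero_right]
    have hq' := (hq0 (n + 1)).le
    have hmono : ∀ k, qBound (q n) k ≤ qBound (q (n + 1)) k :=
      qBound_mono (hq0 n).le (hq n.le_succ) (hq1 (n + 1))
    calc usec b (n + 1 + 1) (k + 1)
        ≤ q (n + 1) ^ (2 * k + 2) * usec b (n + 1) (k + 1) +
            q (n + 1) ^ (2 * k + 1) * usec b (n + 1) k :=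
          usec_succ_succ_le hb hq' (fun m d hmd => hmd ▸ hratio m d) k
      _ ≤ q (n + 1) ^ (2 * k + 2) * qBound (q (n + 1)) (k + 1) +
            q (n + 1) ^ (2 * k + 1) * qBound (q (n + 1)) k := by
          gcongr
          exacts [(ih _).trans (hmono _), (ih _).trans (hmono _)]
      _ = qBound (q (n + 1)) (k + 1) := qBound_succ hq' (hq1 (n + 1)) k

section LogConcave

variable {b : ℕ → ℝ} (hb : ∀ n, 0 < b n) (hlc : ∀ n : ℕ, b n * b (n + 2) ≤ b (n + 1) ^ 2)
include hb hlc

lemma monotone_div_succ_of_logConcave : Monotone fun n => b n / b (n + 1) := by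
  refine monotone_nat_of_le_succ fun n => ?_
  rw [div_le_div_iff₀ (hb _) (hb _)]
  nlinarith [hlc n]

lemma div_le_div_succ_pow_of_logConcave (m d : ℕ) :
    b m / b (m + d) ≤ (b (m + d) / b (m + d + 1)) ^ d := by
  induction d with
  | zero => simp [(hb m).ne']
  | succ d ih =>
    have hr := monotone_div_succ_of_logConcave hb hlc (Nat.le_succ (m + d))
    have hr0 : 0 ≤ b (m + d) / b (m + d + 1) := (div_pos (hb _) (hb _)).le
    calc b m / b (m + (d + 1))
        = b m / b (m + d) * (b (m + d) / b (m + d + 1)) := (div_mul_div_cancel₀ (hb _).ne').symm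
      _ ≤ (b (m + d) / b (m + d + 1)) ^ d * (b (m + d) / b (m + d + 1)) := by gcongr
      _ ≤ (b (m + (d + 1)) / b (m + (d + 1) + 1)) ^ (d + 1) := by
        rw [← pow_succ]; exact pow_le_pow_left₀ hr0 hr _

end LogConcave

/-- if `(b_n)` is log-concave and strictly increasing then, with
`q_n = b_{n-1}/b_n`, one has `0 < q_n ≤ q_{n+1} < 1` and
`u_{n,k} ≤ q_n^{k²}/(q_n²;q_n²)_k` for `n ≥ 1`, `k ≥ 0`. -/
theorem stmt6 (b : ℕ → ℝ) (hb : ∀ n, 0 < b n) (hmono : StrictMono b)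
    (hlc : ∀ n : ℕ, b n * b (n + 2) ≤ b (n + 1) ^ 2) :
    (∀ n : ℕ, 1 ≤ n →
      0 < b (n - 1) / b n ∧ b (n - 1) / b n ≤ b n / b (n + 1) ∧ b (n - 1) / b n < 1) ∧
    (∀ n k : ℕ, 1 ≤ n → usec b n k ≤
      (b (n - 1) / b n) ^ (k ^ 2) /
        ∏ j ∈ Finset.range k, (1 - (b (n - 1) / b n) ^ (2 * j + 2))) := by
  have hq0 : ∀ n, 0 < b n / b (n + 1) := fun n => div_pos (hb n) (hb (n + 1))
  have hq1 : ∀ n, b n / b (n + 1) < 1 := fun n => (div_lt_one (hb _)).2 (hmono n.lt_succ_self)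
  have hq := monotone_div_succ_of_logConcave hb hlc
  constructor
  · rintro (_ | n) hn
    · omega
    · exact ⟨hq0 n, hq n.le_succ, hq1 n⟩
  · rintro (_ | n) k hn
    · omega
    · exact usec_le_qBound hb hq0 hq hq1 (div_le_div_succ_pow_of_logConcave hb hlc) n k
end

section
/- In a symmetric indeterminate moment problem, the coefficients $v_{k,l} := (-1)^l b_0 b_1 \cdots b_{k-1} b_{k,k+2l}$ (where $b_{k,k+2l}$ is the coefficient of $x^k$ in $P_{k+2l}$) satisfy the recurrence $v_{k+1,l} = \frac{b_k}{b_{k+2l}} v_{k,l} + \frac{b_{k+2l-1}}{b_{k+2l}} v_{k+1,l-1}$ for all $k,l \geq 0$. -/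
open Polynomial

/-!
Comparing coefficients of `x^{k+1}` in `x P_n = b_n P_{n+1} + a_n P_{n-1}` expresses the
coefficient of `x^{k+1}` in `P_{n+1}` through those of `x^k` in `P_n` and of `x^{k+1}` in
`P_{n-1}`; with `n = k + 2l` and the normalisation `(-1)^l b_0 ⋯ b_k` this is the recurrence
for `v`. For `l = 0` the `P_{n-1}` term vanishes because `deg P_n ≤ n`.
-/

namespace ThreeTermRecurrence

variable {K : Type*} [Field K] (a b : ℕ → K) (P : ℕ → K[X])

/-- The paper's `v_{k,l}`. -/
def signedCoeff (k l : ℕ) : K :=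
  (-1) ^ l * (∏ i ∈ Finset.range k, b i) * (P (k + 2 * l)).coeff k

variable {a b P}

theorem coeff_succ_eq (hb : ∀ n, b n ≠ 0)
    (hrec : ∀ n, X * P n = C (b n) * P (n + 1) + C (a n) * P (n - 1)) (n k : ℕ) :
    (P (n + 1)).coeff (k + 1) = ((P n).coeff k - a n * (P (n - 1)).coeff (k + 1)) / b n := by
  have h := congrArg (coeff · (k + 1)) (hrec n)
  simp only [coeff_X_mul, coeff_add, coeff_C_mul] at h
  rw [eq_div_iff (hb n), h]
  ring

theorem natDegree_le (hb : ∀ n, b n ≠ 0) (h0 : (P 0).natDegree = 0)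
    (hrec : ∀ n, X * P n = C (b n) * P (n + 1) + C (a n) * P (n - 1)) (n : ℕ) :
    (P n).natDegree ≤ n := by
  induction n using Nat.strong_induction_on with
  | _ n ih =>
    rw [natDegree_le_iff_coeff_eq_zero]
    rcases n with _ | n
    · exact fun m hm => coeff_eq_zero_of_natDegree_lt (h0.trans_lt hm)
    · rintro (_ | m) hm
      · omega
      rw [coeff_succ_eq hb hrec,
        coeff_eq_zero_of_natDegree_lt ((ih n (by omega)).trans_lt (by omega)),
        coeff_eq_zero_of_natDegree_lt ((ih (n - 1) (by omega)).trans_lt (by omega))]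
      simp

theorem signedCoeff_succ_zero (hb : ∀ n, b n ≠ 0) (h0 : (P 0).natDegree = 0)
    (hrec : ∀ n, X * P n = C (b n) * P (n + 1) + C (a n) * P (n - 1)) (k : ℕ) :
    signedCoeff b P (k + 1) 0 = signedCoeff b P k 0 := by
  have hlow : (P (k - 1)).coeff (k + 1) = 0 :=
    coeff_eq_zero_of_natDegree_lt ((natDegree_le hb h0 hrec _).trans_lt (by omega))
  simp only [signedCoeff, mul_zero, add_zero, pow_zero, one_mul, Finset.prod_range_succ,
    coeff_succ_eq hb hrec, hlow, sub_zero]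
  field_simp [hb k]

theorem signedCoeff_succ_succ (hb : ∀ n, b n ≠ 0)
    (hrec : ∀ n, X * P n = C (b n) * P (n + 1) + C (a n) * P (n - 1)) (k l : ℕ) :
    signedCoeff b P (k + 1) (l + 1) =
      b k / b (k + 2 * (l + 1)) * signedCoeff b P k (l + 1) +
        a (k + 2 * (l + 1)) / b (k + 2 * (l + 1)) * signedCoeff b P (k + 1) l := by
  have hn : k + 1 + 2 * (l + 1) = k + 2 * (l + 1) + 1 := by ring
  have hn' : k + 2 * (l + 1) - 1 = k + 1 + 2 * l := by omega
  simp only [signedCoeff, hn, coeff_succ_eq hb hrec, hn', Finset.prod_range_succ]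
  field_simp [hb (k + 2 * (l + 1))]
  ring

end ThreeTermRecurrence

open ThreeTermRecurrence in
/-- for a symmetric moment problem, the coefficients
`v_{k,l} = (-1)^l b_0⋯b_{k-1} b_{k,k+2l}` (where `b_{k,k+2l}` is the coefficient of `x^k`
in `P_{k+2l}`) satisfy `v_{k+1,l} = (b_k/b_{k+2l}) v_{k,l} + (b_{k+2l-1}/b_{k+2l}) v_{k+1,l-1}`
for all `k, l ≥ 0` (with `v_{k,l} = 0` for `l < 0`). -/
theorem stmt10 (b : ℕ → ℝ) (P : ℕ → Polynomial ℝ) (v : ℕ → ℕ → ℝ)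
    (hb : ∀ n, 0 < b n) (hP0 : P 0 = 1)
    (hrec : ∀ n : ℕ, X * P n = C (b n) * P (n + 1) +
      C (if n = 0 then 0 else b (n - 1)) * P (n - 1))
    (hv : ∀ k l : ℕ,
      v k l = (-1) ^ l * (∏ i ∈ Finset.range k, b i) * (P (k + 2 * l)).coeff k) :
    ∀ k l : ℕ, v (k + 1) l = b k / b (k + 2 * l) * v k l +
      (if l = 0 then 0 else b (k + 2 * l - 1) / b (k + 2 * l) * v (k + 1) (l - 1)) := by
  obtain rfl : v = signedCoeff b P := funext₂ hv
  have hb' : ∀ n, b n ≠ 0 := fun n => (hb n).ne'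
  have h0 : (P 0).natDegree = 0 := by simp [hP0]
  rintro k (_ | l)
  · simp [signedCoeff_succ_zero hb' h0 hrec, hb' k]
  · simp [signedCoeff_succ_succ hb' hrec]
end

section
/- If the positive sequence $(b_n)$ is $q$-increasing ($b_{n-1}/b_n \leq q < 1$ for all $n \geq 1$), then $v_{k,l} \leq q^l/(q^2;q^2)_l$ for all $k,l \geq 0$, and consequently $V_n^2 = \sum_{l=0}^\infty v_{n,l}^2 \leq \left((q^2;q^2)_\infty^2 (1-q^2)\right)^{-1}$. -/
/-- The coefficients `v_{k,l} = (-1)^l b_0⋯b_{k-1} b_{k,k+2l}`, defined via their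
initial values `v_{k,0} = 1`, `v_{0,l} = ∏_{j=1}^l b_{2j-2}/b_{2j-1}` and recurrence
`v_{k+1,l} = (b_k/b_{k+2l}) v_{k,l} + (b_{k+2l-1}/b_{k+2l}) v_{k+1,l-1}`. -/
noncomputable def vsec (b : ℕ → ℝ) : ℕ → ℕ → ℝ
  | 0, l => ∏ j ∈ Finset.range l, b (2 * j) / b (2 * j + 1)
  | _ + 1, 0 => 1
  | k + 1, l + 1 =>
      b k / b (k + 2 * (l + 1)) * vsec b k (l + 1) +
        b (k + 2 * l + 1) / b (k + 2 * (l + 1)) * vsec b (k + 1) l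
  termination_by k l => (k, l)

/-!
The bound `v_{k,l} ≤ q^l / (q²;q²)_l` is proved by induction along the recurrence: for a
`q`-increasing sequence the two ratios in it are at most `q^{2l}` and `q`, all terms are
nonnegative, and the bound itself satisfies the recurrence with these ratios (an instance of
`(q²;q²)_l = (q²;q²)_{l-1} (1 - q^{2l})`). Since `(q²;q²)_l ≥ (q²;q²)_∞ > 0`, this gives
`v_{n,l} ≤ q^l / (q²;q²)_∞`, and summing the squares is a geometric series in `q²`.
-/

open Finset Real

theorem le_pow_mul_add_of_le_mul_succ {R : Type*} [CommSemiring R] [PartialOrder R]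
    [IsOrderedRing R] {b : ℕ → R} {q : R} (hq : 0 ≤ q) (hb : ∀ n, b n ≤ q * b (n + 1))
    (k m : ℕ) : b k ≤ q ^ m * b (k + m) := by
  induction m with
  | zero => simp
  | succ m ih =>
    calc b k ≤ q ^ m * b (k + m) := ih
      _ ≤ q ^ m * (q * b (k + m + 1)) := by gcongr; exact hb _
      _ = q ^ (m + 1) * b (k + (m + 1)) := by ring_nf

theorem div_le_pow_of_le_mul_succ {b : ℕ → ℝ} {q : ℝ} (hpos : ∀ n, 0 < b n) (hq : 0 ≤ q)
    (hb : ∀ n, b n ≤ q * b (n + 1)) (k m : ℕ) : b k / b (k + m) ≤ q ^ m :=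
  (div_le_iff₀ (hpos _)).2 (le_pow_mul_add_of_le_mul_succ hq hb k m)

section OneSubProduct

variable {ι : Type*} {a : ι → ℝ}

theorem summable_log_one_sub (ha : Summable a) : Summable fun i => log (1 - a i) := by
  simpa [sub_eq_add_neg] using Real.summable_log_one_add_of_summable ha.neg

theorem tprod_one_sub_pos (ha1 : ∀ i, a i < 1) (ha : Summable a) : 0 < ∏' i, (1 - a i) := by
  rw [← rexp_tsum_eq_tprod (fun i => sub_pos.2 (ha1 i)) (summable_log_one_sub ha)]
  exact exp_pos _

theorem tprod_one_sub_le_prod (ha0 : ∀ i, 0 ≤ a i) (ha1 : ∀ i, a i < 1) (ha : Summable a)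
    (s : Finset ι) : ∏' i, (1 - a i) ≤ ∏ i ∈ s, (1 - a i) := by
  have hpos : ∀ i, 0 < 1 - a i := fun i => sub_pos.2 (ha1 i)
  have hlog := summable_log_one_sub ha
  rw [← rexp_tsum_eq_tprod hpos hlog, ← exp_log (prod_pos fun i _ => hpos i),
    log_prod fun i _ => (hpos i).ne']
  have hneg := hlog.neg.sum_le_tsum s fun i _ =>
    neg_nonneg.2 (log_nonpos (hpos i).le (by linarith [ha0 i]))
  rw [tsum_neg, sum_neg_distrib] at hneg
  exact exp_le_exp.2 (by linarith)

end OneSubProduct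

theorem tsum_sq_le_of_le_pow_mul {v : ℕ → ℝ} {q c : ℝ} (hq0 : 0 ≤ q) (hq1 : q < 1)
    (hv0 : ∀ l, 0 ≤ v l) (hv : ∀ l, v l ≤ q ^ l * c) : ∑' l, v l ^ 2 ≤ c ^ 2 / (1 - q ^ 2) := by
  have hq2 : q ^ 2 < 1 := pow_lt_one₀ hq0 hq1 two_ne_zero
  have hle : ∀ l, v l ^ 2 ≤ (q ^ 2) ^ l * c ^ 2 := fun l => by
    rw [← pow_mul, mul_comm 2 l, pow_mul, ← mul_pow]
    exact pow_le_pow_left₀ (hv0 l) (hv l) 2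
  have hs := (summable_geometric_of_lt_one (sq_nonneg q) hq2).mul_right (c ^ 2)
  calc ∑' l, v l ^ 2 ≤ ∑' l, (q ^ 2) ^ l * c ^ 2 :=
        Summable.tsum_le_tsum hle (hs.of_nonneg_of_le (fun l => sq_nonneg _) hle) hs
    _ = c ^ 2 / (1 - q ^ 2) := by
        rw [tsum_mul_right, tsum_geometric_of_lt_one (sq_nonneg q) hq2, div_eq_mul_inv, mul_comm]

/-- The `q`-Pochhammer symbol `(q²; q²)_l`. -/
def qSqPochhammer (q : ℝ) (l : ℕ) : ℝ := ∏ j ∈ range l, (1 - q ^ (2 * j + 2))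

section QSqPochhammer

variable {q : ℝ}

theorem qSqPochhammer_succ (q : ℝ) (l : ℕ) :
    qSqPochhammer q (l + 1) = qSqPochhammer q l * (1 - q ^ (2 * l + 2)) :=
  prod_range_succ _ _

theorem qSqPochhammer_pos (hq0 : 0 ≤ q) (hq1 : q < 1) (l : ℕ) : 0 < qSqPochhammer q l :=
  prod_pos fun _ _ => sub_pos.2 (pow_lt_one₀ hq0 hq1 (by omega))

theorem qSqPochhammer_le_one (hq0 : 0 ≤ q) (hq1 : q < 1) (l : ℕ) : qSqPochhammer q l ≤ 1 :=
  prod_le_one (fun _ _ => (sub_pos.2 (pow_lt_one₀ hq0 hq1 (by omega))).le)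
    fun _ _ => sub_le_self _ (by positivity)

/-- The bound `q^l / (q²;q²)_l` is a fixed point of the recurrence for `vsec` once the ratios
`b_k / b_{k+2l}` and `b_{k+2l-1} / b_{k+2l}` are replaced by their bounds `q^{2l}` and `q`. -/
theorem pow_mul_pow_div_qSqPochhammer_add (hq0 : 0 ≤ q) (hq1 : q < 1) (l : ℕ) :
    q ^ (2 * (l + 1)) * (q ^ (l + 1) / qSqPochhammer q (l + 1)) +
      q * (q ^ l / qSqPochhammer q l) = q ^ (l + 1) / qSqPochhammer q (l + 1) := by
  have hD := qSqPochhammer_pos hq0 hq1 l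
  have hlast : 0 < 1 - q ^ (2 * l + 2) := sub_pos.2 (pow_lt_one₀ hq0 hq1 (by omega))
  rw [qSqPochhammer_succ]
  field_simp
  ring

theorem summable_pow_two_mul_add_two (hq0 : 0 ≤ q) (hq1 : q < 1) :
    Summable fun j : ℕ => q ^ (2 * j + 2) :=
  ((summable_geometric_of_lt_one (sq_nonneg q) (pow_lt_one₀ hq0 hq1 two_ne_zero)).mul_left
    (q ^ 2)).congr fun j => by ring

end QSqPochhammer

section Vsec

variable {b : ℕ → ℝ}

theorem vsec_nonneg (hb : ∀ n, 0 < b n) (k l : ℕ) : 0 ≤ vsec b k l := by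
  have hdiv : ∀ m n, 0 ≤ b m / b n := fun m n => (div_pos (hb m) (hb n)).le
  induction k, l using vsec.induct with
  | case1 l => rw [vsec]; exact prod_nonneg fun j _ => hdiv _ _
  | case2 k => rw [vsec]; exact zero_le_one
  | case3 k l ih₁ ih₂ =>
    rw [vsec]; exact add_nonneg (mul_nonneg (hdiv _ _) ih₁) (mul_nonneg (hdiv _ _) ih₂)

theorem vsec_le_pow_div_qSqPochhammer {q : ℝ} (hb : ∀ n, 0 < b n) (hq0 : 0 ≤ q) (hq1 : q < 1)
    (hinc : ∀ n, b n ≤ q * b (n + 1)) (k l : ℕ) :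
    vsec b k l ≤ q ^ l / qSqPochhammer q l := by
  induction k, l using vsec.induct with
  | case1 l =>
    rw [vsec]
    calc ∏ j ∈ range l, b (2 * j) / b (2 * j + 1) ≤ ∏ _j ∈ range l, q :=
          prod_le_prod (fun j _ => (div_pos (hb _) (hb _)).le)
            fun j _ => by simpa using div_le_pow_of_le_mul_succ hb hq0 hinc (2 * j) 1
      _ = q ^ l := by rw [prod_const, card_range]
      _ ≤ q ^ l / qSqPochhammer q l :=
          le_div_self (by positivity) (qSqPochhammer_pos hq0 hq1 l) (qSqPochhammer_le_one hq0 hq1 l)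
  | case2 k => simp [vsec, qSqPochhammer]
  | case3 k l ih₁ ih₂ =>
    have hfar : b k / b (k + 2 * (l + 1)) ≤ q ^ (2 * (l + 1)) :=
      div_le_pow_of_le_mul_succ hb hq0 hinc _ _
    have hnear : b (k + 2 * l + 1) / b (k + 2 * (l + 1)) ≤ q := by
      simpa [mul_add, add_assoc] using div_le_pow_of_le_mul_succ hb hq0 hinc (k + 2 * l + 1) 1
    have hv₁ := vsec_nonneg hb k (l + 1)
    have hv₂ := vsec_nonneg hb (k + 1) l
    rw [vsec, ← pow_mul_pow_div_qSqPochhammer_add hq0 hq1 l]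
    gcongr

end Vsec

/-- if `(b_n)` is `q`-increasing, then `v_{k,l} ≤ q^l/(q²;q²)_l` for all
`k, l ≥ 0`, and `V_n² = ∑_l v_{n,l}² ≤ ((q²;q²)_∞² (1-q²))⁻¹`. -/
theorem stmt11 (b : ℕ → ℝ) (q : ℝ) (hb : ∀ n, 0 < b n) (hq0 : 0 < q) (hq1 : q < 1)
    (hqinc : ∀ n : ℕ, 1 ≤ n → b (n - 1) ≤ q * b n) :
    (∀ k l : ℕ, vsec b k l ≤ q ^ l / ∏ j ∈ Finset.range l, (1 - q ^ (2 * j + 2))) ∧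
    (∀ n : ℕ, ∑' l : ℕ, (vsec b n l) ^ 2 ≤
      ((∏' j : ℕ, (1 - q ^ (2 * j + 2))) ^ 2 * (1 - q ^ 2))⁻¹) := by
  have hinc : ∀ n, b n ≤ q * b (n + 1) := fun n => by simpa using hqinc (n + 1) n.succ_pos
  have hbound := vsec_le_pow_div_qSqPochhammer hb hq0.le hq1 hinc
  refine ⟨hbound, fun n => ?_⟩
  have hsmall : ∀ j : ℕ, q ^ (2 * j + 2) < 1 := fun j => pow_lt_one₀ hq0.le hq1 (by omega)
  have hsum := summable_pow_two_mul_add_two hq0.le hq1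
  have hP := tprod_one_sub_pos hsmall hsum
  have hgeom : ∀ l, vsec b n l ≤ q ^ l * (∏' j : ℕ, (1 - q ^ (2 * j + 2)))⁻¹ := fun l =>
    (hbound n l).trans <| by
      rw [← div_eq_mul_inv]
      exact div_le_div_of_nonneg_left (by positivity) hP
        (tprod_one_sub_le_prod (fun j => by positivity) hsmall hsum (range l))
  calc ∑' l, vsec b n l ^ 2
      ≤ (∏' j : ℕ, (1 - q ^ (2 * j + 2)))⁻¹ ^ 2 / (1 - q ^ 2) :=
        tsum_sq_le_of_le_pow_mul hq0.le hq1 (vsec_nonneg hb n) hgeom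
    _ = _ := by rw [mul_inv, inv_pow, div_eq_mul_inv]
end

section
/- Assume $(b_n)$ is log-concave and strictly increasing. Then $v_{k,l} \leq v_{k+1,l}$ for all $k,l \geq 0$, hence $V_k \leq V_{k+1}$. -/
/-!
Monotonicity in `k` is proved by induction on `k` and `l`. Unfolding the recurrence for
`v_{k+1,l+1}` and `v_{k+2,l+1}`, the induction step reduces to
`(b_{k+2l+3} - b_{k+1}) b_{k+2l+1} ≤ (b_{k+2l+2} - b_k) b_{k+2l+2}`, which is log-concavity at
`k+2l+2` together with the decrease of the ratios `b_{n+1}/b_n`; strict monotonicity makes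
`b_{k+2l+2} - b_k` positive so that it can be divided out.

Since a divergent `tsum` is `0`, comparing `V_k` with `V_{k+1}` also requires that
`∑ v_{k+1,l}²` converges whenever `∑ v_{k,l}²` does. Convergence of row `k` forces convergence of
row `0`, and since `(b_{2l} v_{0,l})² / b_{2l+1}` is nondecreasing this forces `∑ 1/b_{2l} < ∞`.
An induction on `l` then gives `v_{k+1,l} ≤ C v_{k,l}` with `C = b_k (b_1/b_0) ∑_j 1/b_{2j}`.
-/

lemma tsum_le_tsum_of_summable_imp {ι : Type*} {f g : ι → ℝ} (hf : ∀ i, 0 ≤ f i)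
    (hfg : ∀ i, f i ≤ g i) (h : Summable f → Summable g) : ∑' i, f i ≤ ∑' i, g i := by
  by_cases hs : Summable f
  · exact hs.tsum_le_tsum hfg (h hs)
  · rw [tsum_eq_zero_of_not_summable hs]
    exact tsum_nonneg fun i => (hf i).trans (hfg i)

section

variable {b : ℕ → ℝ}

lemma antitone_div_of_logConcave (hb : ∀ n, 0 < b n)
    (hlc : ∀ n : ℕ, b n * b (n + 2) ≤ b (n + 1) ^ 2) : Antitone fun n => b (n + 1) / b n := by
  refine antitone_nat_of_succ_le fun n => ?_
  rw [div_le_div_iff₀ (hb _) (hb _)]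
  nlinarith [hlc n]

lemma mul_le_mul_of_logConcave (hb : ∀ n, 0 < b n)
    (hlc : ∀ n : ℕ, b n * b (n + 2) ≤ b (n + 1) ^ 2) {m n : ℕ} (hmn : m ≤ n) :
    b m * b (n + 1) ≤ b (m + 1) * b n := by
  have := antitone_div_of_logConcave hb hlc hmn
  rw [div_le_div_iff₀ (hb _) (hb _)] at this
  linarith

lemma vsec_zero_left (l : ℕ) : vsec b 0 l = ∏ j ∈ Finset.range l, b (2 * j) / b (2 * j + 1) := by
  rw [vsec]

lemma vsec_zero_right (k : ℕ) : vsec b k 0 = 1 := by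
  cases k <;> simp [vsec]

lemma vsec_pos (hb : ∀ n, 0 < b n) (k l : ℕ) : 0 < vsec b k l := by
  induction k generalizing l with
  | zero => exact vsec_zero_left (b := b) l ▸ Finset.prod_pos fun j _ => div_pos (hb _) (hb _)
  | succ k ih =>
    induction l with
    | zero => simp [vsec_zero_right]
    | succ l ihl =>
      rw [vsec]
      exact add_pos (mul_pos (div_pos (hb _) (hb _)) (ih _)) (mul_pos (div_pos (hb _) (hb _)) ihl)

lemma mul_vsec_zero_succ (hb : ∀ n, 0 < b n) (l : ℕ) :
    b (2 * l + 1) * vsec b 0 (l + 1) = b (2 * l) * vsec b 0 l := by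
  rw [vsec_zero_left, vsec_zero_left, Finset.prod_range_succ]
  field_simp [(hb (2 * l + 1)).ne']

lemma mul_vsec_succ_succ (hb : ∀ n, 0 < b n) (k l : ℕ) :
    b (k + 2 * l + 2) * vsec b (k + 1) (l + 1) =
      b k * vsec b k (l + 1) + b (k + 2 * l + 1) * vsec b (k + 1) l := by
  rw [vsec, show k + 2 * (l + 1) = k + 2 * l + 2 by ring]
  field_simp [(hb (k + 2 * l + 2)).ne']

lemma mul_vsec_le_mul_vsec_succ (hb : ∀ n, 0 < b n) (k l : ℕ) :
    b (k + 2 * l) * vsec b k l ≤ b (k + 2 * l + 1) * vsec b k (l + 1) := by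
  cases k with
  | zero => simpa using (mul_vsec_zero_succ hb l).ge
  | succ k =>
    have := mul_vsec_succ_succ hb k l
    have := mul_pos (hb k) (vsec_pos hb k (l + 1))
    rw [show k + 1 + 2 * l = k + 2 * l + 1 by ring, show k + 2 * l + 1 + 1 = k + 2 * l + 2 by ring]
    linarith

lemma vsec_zero_le_vsec_one (hb : ∀ n, 0 < b n)
    (hlc : ∀ n : ℕ, b n * b (n + 2) ≤ b (n + 1) ^ 2) (l : ℕ) : vsec b 0 l ≤ vsec b 1 l := by
  induction l with
  | zero => simp [vsec_zero_right]
  | succ l ih =>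
    have h0 := mul_vsec_zero_succ hb l
    have h1 := mul_vsec_succ_succ hb 0 l
    simp only [zero_add] at h1
    refine le_of_mul_le_mul_left ?_ (mul_pos (hb (2 * l + 1)) (hb (2 * l + 2)))
    calc b (2 * l + 1) * b (2 * l + 2) * vsec b 0 (l + 1)
        = b (2 * l) * b (2 * l + 2) * vsec b 0 l := by rw [mul_right_comm, h0]; ring
      _ ≤ b (2 * l + 1) ^ 2 * vsec b 1 l :=
        mul_le_mul (hlc (2 * l)) ih (vsec_pos hb 0 l).le (sq_nonneg _)
      _ ≤ b (2 * l + 1) * b (2 * l + 2) * vsec b 1 (l + 1) := by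
        rw [mul_assoc, h1]
        nlinarith [mul_pos (hb (2 * l + 1)) (mul_pos (hb 0) (vsec_pos hb 0 (l + 1)))]

lemma vsec_succ_le_vsec_succ_succ (hb : ∀ n, 0 < b n) (hmono : StrictMono b)
    (hlc : ∀ n : ℕ, b n * b (n + 2) ≤ b (n + 1) ^ 2) {k : ℕ}
    (hk : ∀ l, vsec b k l ≤ vsec b (k + 1) l) (l : ℕ) : vsec b (k + 1) l ≤ vsec b (k + 2) l := by
  induction l with
  | zero => simp [vsec_zero_right]
  | succ l ih =>
    have hX := mul_vsec_succ_succ hb k l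
    have hZ := mul_vsec_succ_succ hb (k + 1) l
    rw [show k + 1 + 2 * l + 2 = k + 2 * l + 3 by ring,
      show k + 1 + 2 * l + 1 = k + 2 * l + 2 by ring] at hZ
    have hXY : (b (k + 2 * l + 2) - b k) * vsec b (k + 1) (l + 1) ≤
        b (k + 2 * l + 1) * vsec b (k + 1) l := by
      nlinarith [mul_le_mul_of_nonneg_left (hk (l + 1)) (hb k).le]
    have hcoef : (b (k + 2 * l + 3) - b (k + 1)) * b (k + 2 * l + 1) ≤
        (b (k + 2 * l + 2) - b k) * b (k + 2 * l + 2) := by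
      have hcross : b k * b (k + 2 * l + 2) ≤ b (k + 1) * b (k + 2 * l + 1) :=
        mul_le_mul_of_logConcave hb hlc (show k ≤ k + 2 * l + 1 by omega)
      have hlc' : b (k + 2 * l + 1) * b (k + 2 * l + 3) ≤ b (k + 2 * l + 2) ^ 2 :=
        hlc (k + 2 * l + 1)
      linarith
    have hgap : 0 < b (k + 2 * l + 2) - b k := sub_pos.2 (hmono (by omega))
    have hgap' : 0 < b (k + 2 * l + 3) - b (k + 1) := sub_pos.2 (hmono (by omega))
    have hstep : (b (k + 2 * l + 3) - b (k + 1)) * vsec b (k + 1) (l + 1) ≤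
        b (k + 2 * l + 2) * vsec b (k + 1) l := by
      refine le_of_mul_le_mul_left ?_ hgap
      nlinarith [mul_le_mul_of_nonneg_left hXY hgap'.le,
        mul_le_mul_of_nonneg_right hcoef (vsec_pos hb (k + 1) l).le]
    refine le_of_mul_le_mul_left ?_ (hb (k + 2 * l + 3))
    nlinarith [mul_le_mul_of_nonneg_left ih (hb (k + 2 * l + 2)).le]

lemma vsec_le_vsec_succ (hb : ∀ n, 0 < b n) (hmono : StrictMono b)
    (hlc : ∀ n : ℕ, b n * b (n + 2) ≤ b (n + 1) ^ 2) (k l : ℕ) : vsec b k l ≤ vsec b (k + 1) l := by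
  induction k generalizing l with
  | zero => exact vsec_zero_le_vsec_one hb hlc l
  | succ k ih => exact vsec_succ_le_vsec_succ_succ hb hmono hlc ih l

lemma monotone_sq_mul_vsec_zero_div (hb : ∀ n, 0 < b n)
    (hlc : ∀ n : ℕ, b n * b (n + 2) ≤ b (n + 1) ^ 2) :
    Monotone fun l => (b (2 * l) * vsec b 0 l) ^ 2 / b (2 * l + 1) := by
  refine monotone_nat_of_le_succ fun l => ?_
  have hlc' : b (2 * l + 1) * b (2 * l + 3) ≤ b (2 * l + 2) ^ 2 := hlc (2 * l + 1)
  rw [show 2 * (l + 1) = 2 * l + 2 by ring, div_le_div_iff₀ (hb _) (hb _),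
    ← mul_vsec_zero_succ hb l]
  nlinarith [mul_le_mul_of_nonneg_left hlc'
    (mul_nonneg (sq_nonneg (vsec b 0 (l + 1))) (hb (2 * l + 1)).le)]

lemma summable_inv_of_summable_vsec_zero_sq (hb : ∀ n, 0 < b n) (hmono : StrictMono b)
    (hlc : ∀ n : ℕ, b n * b (n + 2) ≤ b (n + 1) ^ 2)
    (hsum : Summable fun l => vsec b 0 l ^ 2) : Summable fun l => (b (2 * l))⁻¹ := by
  refine .of_nonneg_of_le (fun l => (inv_pos.2 (hb _)).le) (fun l => ?_) (hsum.mul_left (b 1 / b 0 ^ 2))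
  have hlow := monotone_sq_mul_vsec_zero_div hb hlc (Nat.zero_le l)
  have hstep : b (2 * l) ≤ b (2 * l + 1) := hmono.monotone (Nat.le_succ _)
  simp only [mul_zero, zero_add, vsec_zero_right, mul_one] at hlow
  rw [div_le_div_iff₀ (hb _) (hb _)] at hlow
  rw [div_mul_eq_mul_div, inv_eq_one_div, div_le_div_iff₀ (hb _) (pow_pos (hb 0) 2)]
  refine le_of_mul_le_mul_right ?_ (hb (2 * l + 1))
  nlinarith [mul_le_mul_of_nonneg_right hstep
    (mul_nonneg (mul_nonneg (hb (2 * l)).le (hb 1).le) (sq_nonneg (vsec b 0 l)))]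

lemma mul_vsec_succ_le_sum (hb : ∀ n, 0 < b n)
    (hlc : ∀ n : ℕ, b n * b (n + 2) ≤ b (n + 1) ^ 2) (k l : ℕ) :
    b (k + 2 * l + 1) * vsec b (k + 1) l ≤
      b k * (∑ j ∈ Finset.range (l + 1), b (k + 2 * j + 1) / b (k + 2 * j) ^ 2) *
        (b (k + 2 * l) * vsec b k l) := by
  induction l with
  | zero =>
    simp only [zero_add, Finset.sum_range_one, mul_zero, add_zero, vsec_zero_right, mul_one]
    field_simp [(hb k).ne']
    rfl
  | succ l ih =>
    rw [Finset.sum_range_succ, show k + 2 * (l + 1) = k + 2 * l + 2 by ring,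
      show k + 2 * l + 2 + 1 = k + 2 * l + 3 by ring]
    set s := ∑ j ∈ Finset.range (l + 1), b (k + 2 * j + 1) / b (k + 2 * j) ^ 2
    have hs : 0 ≤ s := Finset.sum_nonneg fun j _ => div_nonneg (hb _).le (sq_nonneg _)
    have hlc' : b (k + 2 * l + 1) * b (k + 2 * l + 3) ≤ b (k + 2 * l + 2) ^ 2 :=
      hlc (k + 2 * l + 1)
    have hY : b (k + 2 * l + 1) * vsec b (k + 1) l ≤
        b k * s * (b (k + 2 * l + 1) * vsec b k (l + 1)) :=
      ih.trans (mul_le_mul_of_nonneg_left (mul_vsec_le_mul_vsec_succ hb k l)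
        (mul_nonneg (hb k).le hs))
    refine le_of_mul_le_mul_left ?_ (hb (k + 2 * l + 2))
    calc b (k + 2 * l + 2) * (b (k + 2 * l + 3) * vsec b (k + 1) (l + 1))
        = b (k + 2 * l + 3) * (b k * vsec b k (l + 1) + b (k + 2 * l + 1) * vsec b (k + 1) l) := by
          rw [← mul_vsec_succ_succ hb k l]; ring
      _ ≤ b (k + 2 * l + 3) * (b k * vsec b k (l + 1) +
            b k * s * (b (k + 2 * l + 1) * vsec b k (l + 1))) := by gcongr; exact (hb _).le
      _ ≤ b (k + 2 * l + 3) * (b k * vsec b k (l + 1)) +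
            b k * s * (b (k + 2 * l + 2) ^ 2 * vsec b k (l + 1)) := by
          nlinarith [mul_le_mul_of_nonneg_right hlc'
            (mul_nonneg (mul_nonneg (hb k).le hs) (vsec_pos hb k (l + 1)).le)]
      _ = b (k + 2 * l + 2) * (b k * (s + b (k + 2 * l + 3) / b (k + 2 * l + 2) ^ 2) *
            (b (k + 2 * l + 2) * vsec b k (l + 1))) := by
          field_simp [(hb (k + 2 * l + 2)).ne']; ring

lemma vsec_succ_le_mul_vsec (hb : ∀ n, 0 < b n) (hmono : StrictMono b)
    (hlc : ∀ n : ℕ, b n * b (n + 2) ≤ b (n + 1) ^ 2) (hinv : Summable fun j => (b (2 * j))⁻¹)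
    (k l : ℕ) : vsec b (k + 1) l ≤ b k * (b 1 / b 0 * ∑' j, (b (2 * j))⁻¹) * vsec b k l := by
  have hterm (j : ℕ) : b (k + 2 * j + 1) / b (k + 2 * j) ^ 2 ≤ b 1 / b 0 * (b (2 * j))⁻¹ := by
    rw [pow_two, ← div_div, div_eq_mul_inv _ (b (k + 2 * j))]
    exact mul_le_mul (antitone_div_of_logConcave hb hlc (Nat.zero_le _))
      (inv_anti₀ (hb _) (hmono.monotone (by omega))) (inv_pos.2 (hb _)).le
      (div_pos (hb 1) (hb 0)).le
  have hsum : ∑ j ∈ Finset.range (l + 1), b (k + 2 * j + 1) / b (k + 2 * j) ^ 2 ≤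
      b 1 / b 0 * ∑' j, (b (2 * j))⁻¹ := by
    refine (Finset.sum_le_sum fun j _ => hterm j).trans ?_
    rw [← Finset.mul_sum]
    gcongr
    · exact (div_pos (hb 1) (hb 0)).le
    · exact hinv.sum_le_tsum _ fun j _ => (inv_pos.2 (hb _)).le
  refine le_of_mul_le_mul_left ?_ (hb (k + 2 * l + 1))
  calc b (k + 2 * l + 1) * vsec b (k + 1) l
      ≤ b k * (∑ j ∈ Finset.range (l + 1), b (k + 2 * j + 1) / b (k + 2 * j) ^ 2) *
          (b (k + 2 * l) * vsec b k l) := mul_vsec_succ_le_sum hb hlc k l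
    _ ≤ b k * (b 1 / b 0 * ∑' j, (b (2 * j))⁻¹) * (b (k + 2 * l + 1) * vsec b k l) := by
      have hv := vsec_pos hb k l
      refine mul_le_mul (mul_le_mul_of_nonneg_left hsum (hb k).le)
        (mul_le_mul_of_nonneg_right (hmono.monotone (Nat.le_succ _)) hv.le)
        (mul_pos (hb _) hv).le (mul_nonneg (hb k).le ?_)
      exact mul_nonneg (div_pos (hb 1) (hb 0)).le (tsum_nonneg fun j => (inv_pos.2 (hb _)).le)
    _ = _ := by ring

lemma summable_vsec_succ_sq (hb : ∀ n, 0 < b n) (hmono : StrictMono b)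
    (hlc : ∀ n : ℕ, b n * b (n + 2) ≤ b (n + 1) ^ 2) {k : ℕ}
    (hk : Summable fun l => vsec b k l ^ 2) : Summable fun l => vsec b (k + 1) l ^ 2 := by
  have hrow (l : ℕ) : vsec b 0 l ≤ vsec b k l :=
    monotone_nat_of_le_succ (fun k => vsec_le_vsec_succ hb hmono hlc k l) (Nat.zero_le k)
  have hzero : Summable fun l => vsec b 0 l ^ 2 :=
    .of_nonneg_of_le (fun l => sq_nonneg _)
      (fun l => pow_le_pow_left₀ (vsec_pos hb 0 l).le (hrow l) 2) hk
  have hinv := summable_inv_of_summable_vsec_zero_sq hb hmono hlc hzero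
  set C := b k * (b 1 / b 0 * ∑' j, (b (2 * j))⁻¹)
  refine .of_nonneg_of_le (fun l => sq_nonneg _) (fun l => ?_) (hk.mul_left (C ^ 2))
  rw [← mul_pow]
  exact pow_le_pow_left₀ (vsec_pos hb _ l).le (vsec_succ_le_mul_vsec hb hmono hlc hinv k l) 2

end

/-- if `(b_n)` is log-concave and strictly increasing, then
`v_{k,l} ≤ v_{k+1,l}` for all `k, l ≥ 0`, hence `V_k ≤ V_{k+1}`. -/
theorem stmt12 (b : ℕ → ℝ) (hb : ∀ n, 0 < b n) (hmono : StrictMono b)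
    (hlc : ∀ n : ℕ, b n * b (n + 2) ≤ b (n + 1) ^ 2) :
    (∀ k l : ℕ, vsec b k l ≤ vsec b (k + 1) l) ∧
    (∀ k : ℕ, Real.sqrt (∑' l : ℕ, (vsec b k l) ^ 2) ≤
      Real.sqrt (∑' l : ℕ, (vsec b (k + 1) l) ^ 2)) := by
  refine ⟨vsec_le_vsec_succ hb hmono hlc, fun k => Real.sqrt_le_sqrt ?_⟩
  exact tsum_le_tsum_of_summable_imp (fun l => sq_nonneg _)
    (fun l => pow_le_pow_left₀ (vsec_pos hb k l).le (vsec_le_vsec_succ hb hmono hlc k l) 2)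
    (summable_vsec_succ_sq hb hmono hlc)
end

section
/- Assume $(b_n)$ is log-concave and strictly increasing, with the convention $b_{-1}=0$. Then $v_{k,l} \leq \prod_{j=1}^l \frac{b_{k+2j-2}}{b_{k+2j-1} - b_{k-1}}$ for all $k, l \geq 0$. -/
namespace LogConcaveCoefficients

variable {b : ℕ → ℝ}

lemma antitone_succ_div (hb : ∀ n, 0 < b n)
    (hlc : ∀ n : ℕ, b n * b (n + 2) ≤ b (n + 1) ^ 2) :
    Antitone fun n => b (n + 1) / b n := by
  refine antitone_nat_of_succ_le fun n => ?_
  rw [div_le_div_iff₀ (hb _) (hb _)]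
  linarith [hlc n]

lemma mul_succ_le_succ_mul (hb : ∀ n, 0 < b n)
    (hlc : ∀ n : ℕ, b n * b (n + 2) ≤ b (n + 1) ^ 2) {m n : ℕ} (hmn : m ≤ n) :
    b m * b (n + 1) ≤ b (m + 1) * b n := by
  have h := antitone_succ_div hb hlc hmn
  rw [div_le_div_iff₀ (hb _) (hb _)] at h
  linarith

/-- `b_{k-1}`, with the convention `b_{-1} = 0`. -/
def prevTerm (b : ℕ → ℝ) (k : ℕ) : ℝ :=
  if k = 0 then 0 else b (k - 1)

@[simp]
lemma prevTerm_succ (k : ℕ) : prevTerm b (k + 1) = b k := by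
  simp [prevTerm]

lemma prevTerm_lt (hb : ∀ n, 0 < b n) (hmono : StrictMono b) {k n : ℕ} (hkn : k ≤ n) :
    prevTerm b k < b n := by
  unfold prevTerm
  split_ifs with hk
  · exact hb n
  · exact hmono (by omega)

lemma prevTerm_mul_succ_le (hb : ∀ n, 0 < b n)
    (hlc : ∀ n : ℕ, b n * b (n + 2) ≤ b (n + 1) ^ 2) {k n : ℕ} (hkn : k ≤ n) :
    prevTerm b k * b (n + 1) ≤ b k * b n := by
  cases k with
  | zero => simpa [prevTerm] using mul_nonneg (hb 0).le (hb n).le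
  | succ k => simpa using mul_succ_le_succ_mul hb hlc (m := k) (n := n) (by omega)

/-- `∏_{j=1}^l b_{k+2j-2} / (b_{k+2j-1} - b_{k-1})`, reindexed to start at `j = 0`. -/
noncomputable def bound (b : ℕ → ℝ) (k l : ℕ) : ℝ :=
  ∏ j ∈ Finset.range l, b (k + 2 * j) / (b (k + 2 * j + 1) - prevTerm b k)

lemma bound_le_bound_succ (hb : ∀ n, 0 < b n) (hmono : StrictMono b)
    (hlc : ∀ n : ℕ, b n * b (n + 2) ≤ b (n + 1) ^ 2) (k l : ℕ) :
    bound b k l ≤ bound b (k + 1) l := by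
  refine Finset.prod_le_prod (fun j _ => ?_) (fun j _ => ?_)
  · exact div_nonneg (hb _).le (sub_pos.2 (prevTerm_lt hb hmono (by omega))).le
  · have hden : 0 < b (k + 2 * j + 1) - prevTerm b k :=
      sub_pos.2 (prevTerm_lt hb hmono (by omega))
    have hden' : 0 < b (k + 2 * j + 2) - b k := sub_pos.2 (hmono (by omega))
    rw [prevTerm_succ, show k + 1 + 2 * j = k + 2 * j + 1 by omega, div_le_div_iff₀ hden hden']
    have hprev := prevTerm_mul_succ_le hb hlc (k := k) (n := k + 2 * j) (by omega)
    nlinarith [hlc (k + 2 * j)]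

lemma bound_succ_succ (k l : ℕ) :
    bound b (k + 1) (l + 1) =
      bound b (k + 1) l * (b (k + 2 * l + 1) / (b (k + 2 * (l + 1)) - b k)) := by
  rw [bound, Finset.prod_range_succ, prevTerm_succ,
    show k + 1 + 2 * l + 1 = k + 2 * (l + 1) by omega, show k + 1 + 2 * l = k + 2 * l + 1 by omega]
  rfl

lemma bound_succ_recurrence (hb : ∀ n, 0 < b n) (hmono : StrictMono b) (k l : ℕ) :
    b k / b (k + 2 * (l + 1)) * bound b (k + 1) (l + 1) +
        b (k + 2 * l + 1) / b (k + 2 * (l + 1)) * bound b (k + 1) l =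
      bound b (k + 1) (l + 1) := by
  have hX : b (k + 2 * (l + 1)) ≠ 0 := (hb _).ne'
  have hXk : b (k + 2 * (l + 1)) - b k ≠ 0 := (sub_pos.2 (hmono (by omega))).ne'
  rw [bound_succ_succ]
  field_simp
  ring

theorem vsec_le_bound (hb : ∀ n, 0 < b n) (hmono : StrictMono b)
    (hlc : ∀ n : ℕ, b n * b (n + 2) ≤ b (n + 1) ^ 2) (k l : ℕ) :
    vsec b k l ≤ bound b k l := by
  induction k generalizing l with
  | zero => simp [vsec, bound, prevTerm]
  | succ k ihk =>
    induction l with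
    | zero => simp [vsec, bound]
    | succ l ihl =>
      rw [vsec]
      calc b k / b (k + 2 * (l + 1)) * vsec b k (l + 1) +
              b (k + 2 * l + 1) / b (k + 2 * (l + 1)) * vsec b (k + 1) l
          ≤ b k / b (k + 2 * (l + 1)) * bound b (k + 1) (l + 1) +
              b (k + 2 * l + 1) / b (k + 2 * (l + 1)) * bound b (k + 1) l := by
            have hdiv (n : ℕ) : 0 ≤ b n / b (k + 2 * (l + 1)) := div_nonneg (hb n).le (hb _).le
            have hshift := (ihk (l + 1)).trans (bound_le_bound_succ hb hmono hlc k (l + 1))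
            exact add_le_add (mul_le_mul_of_nonneg_left hshift (hdiv k))
              (mul_le_mul_of_nonneg_left ihl (hdiv _))
        _ = bound b (k + 1) (l + 1) := bound_succ_recurrence hb hmono k l

end LogConcaveCoefficients

/-- if `(b_n)` is log-concave and strictly increasing (with `b_{-1} = 0`),
then `v_{k,l} ≤ ∏_{j=1}^l b_{k+2j-2}/(b_{k+2j-1} - b_{k-1})` for all `k, l ≥ 0`
(the product below is indexed by `j = 0,…,l-1`, corresponding to `j+1 = 1,…,l`). -/
theorem stmt13 (b : ℕ → ℝ) (hb : ∀ n, 0 < b n) (hmono : StrictMono b)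
    (hlc : ∀ n : ℕ, b n * b (n + 2) ≤ b (n + 1) ^ 2) :
    ∀ k l : ℕ, vsec b k l ≤ ∏ j ∈ Finset.range l,
      b (k + 2 * j) / (b (k + 2 * j + 1) - (if k = 0 then 0 else b (k - 1))) :=
  LogConcaveCoefficients.vsec_le_bound hb hmono hlc
end

section
/- For $0 < q < 1$, the sequence $v_n = (-1)^n q^{n^2 - n/2}/(q;q)_n$ satisfies $\sum_{n=0}^\infty s_{m+n} v_n = 0$ for every $m \geq 0$, where $s_n = q^{-n^2/2}$; moreover the series is absolutely convergent, with $\sum_{n=0}^\infty s_{m+n}|v_n| = q^{-m^2/2}(-q^{-m};q)_\infty < \infty$. -/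
/-!
Let `F(z) = ∑ₙ q^(n choose 2) zⁿ / (q;q)ₙ`. Comparing coefficients gives `F(z) = (1 + z) F(qz)`,
hence `F(z) = ∏_{k<N} (1 + qᵏz) · F(qᴺz)`, and `F(qᴺz) → F(0) = 1` by dominated convergence;
this is Euler's identity `F(z) = (-z;q)_∞`. Up to the factor `q^(-m²/2)`, the term `s_{m+n} vₙ`
is the `n`-th term of `F(-q⁻ᵐ)`, which vanishes because the factor `1 + qᵐz` of the product does.
The coefficients are nonnegative, so the absolute series is `q^(-m²/2) F(q⁻ᵐ) = q^(-m²/2) (-q⁻ᵐ;q)_∞`.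
-/

open Filter Topology Finset

section EulerSeries

variable {𝕜 : Type*} [NormedField 𝕜]

noncomputable def eulerCoeff (q : 𝕜) (n : ℕ) : 𝕜 :=
  q ^ n.choose 2 / ∏ j ∈ range n, (1 - q ^ (j + 1))

noncomputable def eulerSeries (q z : 𝕜) : 𝕜 :=
  ∑' n, eulerCoeff q n * z ^ n

@[simp]
lemma eulerCoeff_zero (q : 𝕜) : eulerCoeff q 0 = 1 := by
  simp [eulerCoeff]

lemma eulerCoeff_succ (q : 𝕜) (n : ℕ) :
    eulerCoeff q (n + 1) = eulerCoeff q n * q ^ n / (1 - q ^ (n + 1)) := by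
  rw [eulerCoeff, eulerCoeff, Nat.choose_succ_succ', Nat.choose_one_right, prod_range_succ,
    add_comm n, pow_add, mul_div_mul_comm, mul_div_assoc]

lemma one_sub_norm_le_norm_one_sub_pow {q : 𝕜} (hq : ‖q‖ < 1) (n : ℕ) :
    1 - ‖q‖ ≤ ‖1 - q ^ (n + 1)‖ :=
  calc 1 - ‖q‖ ≤ 1 - ‖q‖ ^ (n + 1) := by
        gcongr; exact pow_le_of_le_one (norm_nonneg q) hq.le n.succ_ne_zero
    _ = ‖(1 : 𝕜)‖ - ‖q ^ (n + 1)‖ := by rw [norm_one, norm_pow]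
    _ ≤ ‖1 - q ^ (n + 1)‖ := norm_sub_norm_le _ _

lemma eulerCoeff_succ_mul {q : 𝕜} (hq : ‖q‖ < 1) (n : ℕ) :
    eulerCoeff q (n + 1) * (1 - q ^ (n + 1)) = eulerCoeff q n * q ^ n := by
  have h : 1 - q ^ (n + 1) ≠ 0 :=
    norm_pos_iff.mp ((sub_pos.mpr hq).trans_le (one_sub_norm_le_norm_one_sub_pow hq n))
  rw [eulerCoeff_succ, div_mul_cancel₀ _ h]

lemma summable_norm_eulerCoeff_mul_pow {q : 𝕜} (hq : ‖q‖ < 1) (z : 𝕜) :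
    Summable fun n => ‖eulerCoeff q n * z ^ n‖ := by
  have hq' : 0 < 1 - ‖q‖ := sub_pos.mpr hq
  have hsmall : ∀ᶠ n : ℕ in atTop, ‖q‖ ^ n * ‖z‖ / (1 - ‖q‖) ≤ 1 / 2 := by
    refine Tendsto.eventually_le_const (show (0 : ℝ) < 1 / 2 by norm_num) ?_
    simpa using ((tendsto_pow_atTop_nhds_zero_of_lt_one (norm_nonneg q) hq).mul_const ‖z‖).div_const
      (1 - ‖q‖)
  refine summable_of_ratio_norm_eventually_le (r := 1 / 2) (by norm_num) ?_
  filter_upwards [hsmall] with n hn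
  rw [norm_norm, norm_norm]
  calc ‖eulerCoeff q (n + 1) * z ^ (n + 1)‖
      = ‖eulerCoeff q n * z ^ n‖ * (‖q‖ ^ n * ‖z‖ / ‖1 - q ^ (n + 1)‖) := by
        rw [eulerCoeff_succ]; simp only [norm_mul, norm_div, norm_pow]; ring
    _ ≤ ‖eulerCoeff q n * z ^ n‖ * (‖q‖ ^ n * ‖z‖ / (1 - ‖q‖)) := by
        gcongr; exact one_sub_norm_le_norm_one_sub_pow hq n
    _ ≤ 1 / 2 * ‖eulerCoeff q n * z ^ n‖ := by
        rw [mul_comm]; gcongr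

variable [CompleteSpace 𝕜]

lemma summable_eulerCoeff_mul_pow {q : 𝕜} (hq : ‖q‖ < 1) (z : 𝕜) :
    Summable fun n => eulerCoeff q n * z ^ n :=
  (summable_norm_eulerCoeff_mul_pow hq z).of_norm

lemma hasSum_eulerSeries {q : 𝕜} (hq : ‖q‖ < 1) (z : 𝕜) :
    HasSum (fun n => eulerCoeff q n * z ^ n) (eulerSeries q z) :=
  (summable_eulerCoeff_mul_pow hq z).hasSum

lemma eulerSeries_eq_one_add_mul {q : 𝕜} (hq : ‖q‖ < 1) (z : 𝕜) :
    eulerSeries q z = (1 + z) * eulerSeries q (q * z) := by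
  have hz := summable_eulerCoeff_mul_pow hq z
  have hqz := summable_eulerCoeff_mul_pow hq (q * z)
  have hqz' := (summable_nat_add_iff 1).mpr hqz
  calc eulerSeries q z
      = 1 + ∑' n, eulerCoeff q (n + 1) * z ^ (n + 1) := by
        rw [eulerSeries, hz.tsum_eq_zero_add]; simp
    _ = 1 + ∑' n, (eulerCoeff q (n + 1) * (q * z) ^ (n + 1) +
          z * (eulerCoeff q n * (q * z) ^ n)) := by
        congr 1; refine tsum_congr fun n => ?_
        linear_combination z ^ (n + 1) * eulerCoeff_succ_mul hq n
    _ = (1 + ∑' n, eulerCoeff q (n + 1) * (q * z) ^ (n + 1)) + z * eulerSeries q (q * z) := by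
        rw [hqz'.tsum_add (hqz.mul_left z), tsum_mul_left, eulerSeries, add_assoc]
    _ = (1 + z) * eulerSeries q (q * z) := by
        rw [eulerSeries, hqz.tsum_eq_zero_add]; simp; ring

lemma eulerSeries_eq_prod_mul {q : 𝕜} (hq : ‖q‖ < 1) (z : 𝕜) (N : ℕ) :
    eulerSeries q z = (∏ k ∈ range N, (1 + q ^ k * z)) * eulerSeries q (q ^ N * z) := by
  induction N with
  | zero => simp
  | succ N ih =>
    rw [ih, eulerSeries_eq_one_add_mul hq (q ^ N * z), prod_range_succ, ← mul_assoc q, ← pow_succ',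
      mul_assoc]

lemma tendsto_eulerSeries_pow_mul {q : 𝕜} (hq : ‖q‖ < 1) (z : 𝕜) :
    Tendsto (fun N : ℕ => eulerSeries q (q ^ N * z)) atTop (𝓝 1) := by
  have hlim : ∑' n, eulerCoeff q n * (0 : 𝕜) ^ n = 1 := by
    rw [tsum_eq_single 0 fun n hn => by simp [hn]]; simp
  rw [← hlim]
  refine tendsto_tsum_of_dominated_convergence (summable_norm_eulerCoeff_mul_pow hq z)
    (fun n => ?_) (Eventually.of_forall fun N n => ?_)
  · have h0 : Tendsto (fun N : ℕ => q ^ N * z) atTop (𝓝 0) := by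
      simpa using (tendsto_pow_atTop_nhds_zero_of_norm_lt_one hq).mul_const z
    exact (h0.pow n).const_mul _
  · simp only [norm_mul, norm_pow]
    gcongr
    exact mul_le_of_le_one_left (norm_nonneg z) (pow_le_one₀ (norm_nonneg q) hq.le)

theorem hasProd_one_add_pow_mul_eulerSeries {q : 𝕜} (hq : ‖q‖ < 1) (z : 𝕜) :
    HasProd (fun k => 1 + q ^ k * z) (eulerSeries q z) := by
  have hmul : Multipliable fun k => 1 + q ^ k * z :=
    multipliable_one_add_of_summable (by
      simpa [norm_mul, norm_pow] using
        (summable_geometric_of_lt_one (norm_nonneg q) hq).mul_right ‖z‖)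
  have hlim := (hmul.hasProd.tendsto_prod_nat.mul (tendsto_eulerSeries_pow_mul hq z))
  rw [mul_one] at hlim
  have hconst : (fun N => (∏ k ∈ range N, (1 + q ^ k * z)) * eulerSeries q (q ^ N * z)) =
      fun _ => eulerSeries q z := funext fun N => (eulerSeries_eq_prod_mul hq z N).symm
  rw [hconst] at hlim
  rw [← tendsto_nhds_unique hlim tendsto_const_nhds]
  exact hmul.hasProd

lemma eulerSeries_neg_inv_pow_eq_zero {q : 𝕜} (hq : ‖q‖ < 1) (hq0 : q ≠ 0) (m : ℕ) :
    eulerSeries q (-(q ^ m)⁻¹) = 0 := by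
  rw [eulerSeries_eq_prod_mul hq _ (m + 1), prod_eq_zero (self_mem_range_succ m), zero_mul]
  rw [mul_neg, mul_inv_cancel₀ (pow_ne_zero m hq0), add_neg_cancel]

end EulerSeries

lemma eulerCoeff_nonneg {q : ℝ} (hq0 : 0 ≤ q) (hq1 : q < 1) (n : ℕ) : 0 ≤ eulerCoeff q n :=
  div_nonneg (pow_nonneg hq0 _) (prod_nonneg fun _ _ => sub_nonneg.mpr (pow_le_one₀ hq0 hq1.le))

lemma rpow_mul_alternating_eq_eulerCoeff_mul {q : ℝ} (hq : 0 < q) (m n : ℕ) :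
    q ^ (-(((m + n : ℕ) : ℝ)) ^ 2 / 2) *
      ((-1) ^ n * q ^ (((n : ℝ)) ^ 2 - (n : ℝ) / 2) / ∏ j ∈ range n, (1 - q ^ (j + 1))) =
    q ^ (-((m : ℝ)) ^ 2 / 2) * (eulerCoeff q n * (-(q ^ m)⁻¹) ^ n) := by
  have hexp : q ^ (-(((m + n : ℕ) : ℝ)) ^ 2 / 2) * q ^ (((n : ℝ)) ^ 2 - (n : ℝ) / 2) =
      q ^ (-((m : ℝ)) ^ 2 / 2) * (q ^ n.choose 2 * ((q ^ m) ^ n)⁻¹) := by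
    rw [← Real.rpow_natCast q (n.choose 2), ← pow_mul, ← Real.rpow_natCast q (m * n),
      ← Real.rpow_neg hq.le, ← Real.rpow_add hq, ← Real.rpow_add hq, ← Real.rpow_add hq]
    congr 1
    push_cast [Nat.cast_choose_two]
    ring
  rw [eulerCoeff, neg_pow (q ^ m)⁻¹, inv_pow]
  linear_combination ((-1) ^ n / ∏ j ∈ range n, (1 - q ^ (j + 1))) * hexp

/-- for `0 < q < 1`, the sequence `v_n = (-1)ⁿ q^{n²-n/2}/(q;q)_n`
satisfies `∑_n s_{m+n} v_n = 0` for every `m ≥ 0`, where `s_n = q^{-n²/2}`; moreover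
`∑_n s_{m+n} |v_n| = q^{-m²/2} (-q^{-m};q)_∞ < ∞`. -/
theorem stmt15 (q : ℝ) (hq0 : 0 < q) (hq1 : q < 1) (m : ℕ) :
    HasSum (fun n : ℕ => q ^ (-(((m + n : ℕ) : ℝ)) ^ 2 / 2) *
      ((-1) ^ n * q ^ (((n : ℝ)) ^ 2 - (n : ℝ) / 2) /
        ∏ j ∈ Finset.range n, (1 - q ^ (j + 1)))) 0 ∧
    HasSum (fun n : ℕ => q ^ (-(((m + n : ℕ) : ℝ)) ^ 2 / 2) *
      |(-1) ^ n * q ^ (((n : ℝ)) ^ 2 - (n : ℝ) / 2) /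
        ∏ j ∈ Finset.range n, (1 - q ^ (j + 1))|)
      (q ^ (-((m : ℝ)) ^ 2 / 2) * ∏' j : ℕ, (1 + q ^ ((j : ℤ) - (m : ℤ)))) := by
  have hq : ‖q‖ < 1 := by rwa [Real.norm_eq_abs, abs_of_pos hq0]
  have hc : 0 < q ^ (-((m : ℝ)) ^ 2 / 2) := Real.rpow_pos_of_pos hq0 _
  have hz : 0 < (q ^ m)⁻¹ := by positivity
  have hterm := rpow_mul_alternating_eq_eulerCoeff_mul hq0 m
  constructor
  · have h := (hasSum_eulerSeries hq (-(q ^ m)⁻¹)).mul_left (q ^ (-((m : ℝ)) ^ 2 / 2))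
    rw [eulerSeries_neg_inv_pow_eq_zero hq hq0.ne' m, mul_zero] at h
    simpa only [hterm] using h
  · have hprod : ∏' j : ℕ, (1 + q ^ ((j : ℤ) - (m : ℤ))) = eulerSeries q (q ^ m)⁻¹ := by
      simp only [zpow_sub₀ hq0.ne', zpow_natCast, div_eq_mul_inv]
      exact (hasProd_one_add_pow_mul_eulerSeries hq _).tprod_eq
    rw [hprod]
    refine ((hasSum_eulerSeries hq _).mul_left _).congr_fun fun n => ?_
    rw [← abs_of_pos (Real.rpow_pos_of_pos hq0 _), ← abs_mul, hterm, abs_mul, abs_mul, abs_of_pos hc,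
      abs_of_nonneg (eulerCoeff_nonneg hq0.le hq1 n), abs_pow, abs_neg, abs_of_pos hz]
end

section
/- Let $(b_n)$ be a bounded positive sequence defining a symmetric moment problem with even moments $s_{2n}$, and set $U_n = s_{2n}/(b_0^2\cdots b_{n-1}^2)$. Then $\liminf_{n\to\infty} U_n^{1/n} \geq 4$. -/
open Polynomial Finset Filter Topology

namespace Polynomial

variable {R : Type*} [CommRing R] (k : ℕ) (a : R)

theorem dickson_zero_eq_C : dickson k a 0 = C (3 - k : R) := by
  rw [dickson_zero, map_sub, map_natCast, map_ofNat]

theorem natDegree_dickson_le (n : ℕ) : (dickson k a n).natDegree ≤ n := by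
  induction n using Nat.twoStepInduction with
  | zero => simp only [dickson_zero_eq_C, natDegree_C, le_refl]
  | one => simp only [dickson_one, natDegree_X_le]
  | more n ih₁ ih₂ =>
    rw [dickson_add_two]
    refine (natDegree_sub_le _ _).trans (max_le ?_ ?_)
    · exact (natDegree_mul_le.trans (add_le_add natDegree_X_le ih₂)).trans (by omega)
    · exact (natDegree_C_mul_le _ _).trans (by omega)

theorem coeff_dickson_add_one (n : ℕ) : (dickson k a (n + 1)).coeff (n + 1) = 1 := by
  induction n using Nat.twoStepInduction with
  | zero => simp
  | one => simp
  | more n _ ih =>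
    have hlow : (dickson k a (n + 1)).coeff (n + 3) = 0 :=
      coeff_eq_zero_of_natDegree_lt ((natDegree_dickson_le k a _).trans_lt (by omega))
    rw [dickson_add_two, coeff_sub, coeff_X_mul, coeff_C_mul, ih, hlow, mul_zero, sub_zero]

theorem dickson_one_add_one (n : ℕ) :
    dickson 1 a (n + 1) = 2 * dickson 2 a (n + 1) - X * dickson 2 a n := by
  induction n using Nat.twoStepInduction with
  | zero =>
    simp only [zero_add, dickson_one, dickson_zero, Nat.cast_ofNat]
    ring
  | one =>
    simp only [Nat.reduceAdd, dickson_add_two, zero_add, dickson_one, dickson_zero, Nat.cast_one,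
      Nat.cast_ofNat]
    ring
  | more n ih₁ ih₂ =>
    rw [dickson_add_two, ih₁, ih₂, dickson_add_two 2 a (n + 1), dickson_add_two 2 a n]
    ring

theorem dickson_two_cassini (n : ℕ) :
    dickson 2 a (n + 1) ^ 2 - X * dickson 2 a (n + 1) * dickson 2 a n + C a * dickson 2 a n ^ 2
      = C (a ^ (n + 1)) := by
  induction n with
  | zero =>
    simp only [zero_add, dickson_one, dickson_zero, Nat.cast_ofNat, pow_one]
    ring
  | succ n ih =>
    rw [dickson_add_two, pow_succ a, C_mul]
    linear_combination C a * ih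

theorem dickson_one_sq_add (n : ℕ) :
    dickson 1 a (n + 1) ^ 2 + (C (4 * a) - X ^ 2) * dickson 2 a n ^ 2 = C (4 * a ^ (n + 1)) := by
  rw [dickson_one_add_one, C_mul, C_mul, ← dickson_two_cassini, map_ofNat]
  ring

end Polynomial

theorem le_mul_of_sq_le_mul_of_le_mul_pow {r : ℕ → ℝ} {C K : ℝ} (hK : 0 < K)
    (hr : ∀ m, 0 ≤ r m) (hlog : ∀ m, r (m + 1) ^ 2 ≤ r m * r (m + 2))
    (hgrowth : ∀ m, r m ≤ C * K ^ m) : r 1 ≤ K * r 0 := by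
  by_contra! hK1
  have hr0 : 0 < r 0 := by
    refine (hr 0).lt_of_ne fun h0 => ?_
    have : r 1 ^ 2 ≤ 0 := by simpa [← h0] using hlog 0
    rw [← h0, mul_zero] at hK1
    nlinarith
  set x := r 1 / r 0
  have hKx : K < x := (lt_div_iff₀ hr0).2 hK1
  -- the ratios `r (m + 1) / r m` increase, so `r` grows at least like `x ^ m`
  have hstep : ∀ m, 0 < r m ∧ x * r m ≤ r (m + 1) := by
    intro m
    induction m with
    | zero => exact ⟨hr0, (div_mul_cancel₀ _ hr0.ne').le⟩
    | succ m ih =>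
      have hm1 : 0 < r (m + 1) := (mul_pos (hK.trans hKx) ih.1).trans_le ih.2
      have : x * r (m + 1) * r m ≤ r (m + 2) * r m := by nlinarith [hlog m, ih.2]
      exact ⟨hm1, le_of_mul_le_mul_right this ih.1⟩
  have hgeom : ∀ m, x ^ m * r 0 ≤ r m := by
    intro m
    induction m with
    | zero => simp
    | succ m ih =>
      calc x ^ (m + 1) * r 0 = x * (x ^ m * r 0) := by ring
        _ ≤ x * r m := mul_le_mul_of_nonneg_left ih (hK.trans hKx).le
        _ ≤ r (m + 1) := (hstep m).2
  obtain ⟨m, hm⟩ := pow_unbounded_of_one_lt (C / r 0) ((one_lt_div hK).2 hKx)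
  have : x ^ m * r 0 ≤ C * K ^ m := (hgeom m).trans (hgrowth m)
  rw [div_pow, lt_div_iff₀ (by positivity), div_mul_eq_mul_div, div_lt_iff₀ hr0] at hm
  linarith

theorem monotone_div_of_two_mul_le_add {t : ℕ → ℝ} (h0 : t 0 = 0)
    (hconv : ∀ n, 2 * t (n + 1) ≤ t n + t (n + 2)) :
    Monotone fun n : ℕ => t (n + 1) / (n + 1) := by
  have key : ∀ n : ℕ, t n ≤ n * (t (n + 1) - t n) := by
    intro n
    induction n with
    | zero => simp [h0]
    | succ n ih =>
      push_cast
      nlinarith [hconv n, ih]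
  refine monotone_nat_of_le_succ fun n => ?_
  rw [div_le_div_iff₀ (by positivity) (by positivity)]
  have := key (n + 1)
  push_cast at this ⊢
  linarith

theorem exists_le_pow_tendsto_rpow_inv {x : ℕ → ℝ} (hx : ∀ n, 0 < x n) (hx0 : x 0 = 1)
    (hlog : ∀ n, x (n + 1) ^ 2 ≤ x n * x (n + 2)) {C : ℝ} (hC : ∀ n, x n ≤ C ^ n) :
    ∃ L, (∀ n, x n ≤ L ^ n) ∧ Tendsto (fun n : ℕ => x n ^ (n : ℝ)⁻¹) atTop (𝓝 L) := by
  have hroot : ∀ n : ℕ,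
      x (n + 1) ^ ((n + 1 : ℕ) : ℝ)⁻¹ = Real.exp (Real.log (x (n + 1)) / (n + 1)) := by
    intro n
    rw [Real.rpow_def_of_pos (hx _), div_eq_mul_inv]
    push_cast; rfl
  have hmono : Monotone fun n : ℕ => x (n + 1) ^ ((n + 1 : ℕ) : ℝ)⁻¹ := by
    simp_rw [hroot]
    refine Real.exp_monotone.comp (monotone_div_of_two_mul_le_add (t := fun n => Real.log (x n))
      (by rw [hx0, Real.log_one]) fun n => ?_)
    rw [← Nat.cast_ofNat, ← Real.log_pow, ← Real.log_mul (hx n).ne' (hx _).ne']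
    exact Real.log_le_log (pow_pos (hx _) 2) (hlog n)
  have hC0 : 0 ≤ C := by simpa using (hx 1).le.trans (hC 1)
  have hbdd : BddAbove (Set.range fun n : ℕ => x (n + 1) ^ ((n + 1 : ℕ) : ℝ)⁻¹) := by
    refine ⟨C, Set.forall_mem_range.2 fun n => ?_⟩
    calc x (n + 1) ^ ((n + 1 : ℕ) : ℝ)⁻¹ ≤ (C ^ (n + 1)) ^ ((n + 1 : ℕ) : ℝ)⁻¹ :=
          Real.rpow_le_rpow (hx _).le (hC _) (by positivity)
      _ = C := Real.pow_rpow_inv_natCast hC0 n.succ_ne_zero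
  refine ⟨_, fun n => ?_, (tendsto_add_atTop_iff_nat 1).1 (tendsto_atTop_ciSup hmono hbdd)⟩
  cases n with
  | zero => simp [hx0]
  | succ n =>
    calc x (n + 1) = (x (n + 1) ^ ((n + 1 : ℕ) : ℝ)⁻¹) ^ (n + 1) :=
          (Real.rpow_inv_natCast_pow (hx _).le n.succ_ne_zero).symm
      _ ≤ _ := pow_le_pow_left₀ (Real.rpow_nonneg (hx _).le _) (le_ciSup hbdd n) _

namespace LinearMap

variable {Λ : ℝ[X] →ₗ[ℝ] ℝ}

theorem apply_C_mul (c : ℝ) (p : ℝ[X]) : Λ (C c * p) = c * Λ p := by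
  rw [C_mul', map_smul, smul_eq_mul]

theorem apply_dickson_sq_le (hΛ1 : Λ 1 = 1) {L : ℝ}
    (hL : ∀ q, Λ (X ^ 2 * q ^ 2) ≤ L * Λ (q ^ 2)) (n : ℕ) :
    Λ (dickson 1 (L / 4) (n + 1) ^ 2) ≤ 4 * (L / 4) ^ (n + 1) := by
  have hpell := dickson_one_sq_add (L / 4) n
  rw [mul_div_cancel₀ L four_ne_zero, ← eq_sub_iff_add_eq] at hpell
  rw [hpell, sub_mul, map_sub, map_sub, ← mul_one (C _), apply_C_mul, apply_C_mul, hΛ1]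
  linarith [hL (dickson 2 (L / 4) n)]

variable (hΛ : ∀ p, 0 ≤ Λ (p ^ 2))
include hΛ

theorem apply_mul_sq_le (p q : ℝ[X]) : Λ (p * q) ^ 2 ≤ Λ (p ^ 2) * Λ (q ^ 2) := by
  have hquad : ∀ x : ℝ, 0 ≤ Λ (q ^ 2) * (x * x) + 2 * Λ (p * q) * x + Λ (p ^ 2) := by
    intro x
    have hexp : (C x * q + p) ^ 2 = C x * (C x * q ^ 2) + C x * (2 * (p * q)) + p ^ 2 := by ring
    have h2 : Λ (2 * (p * q)) = 2 * Λ (p * q) := by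
      rw [← map_ofNat C 2, apply_C_mul]
    have := hΛ (C x * q + p)
    rw [hexp, map_add, map_add, apply_C_mul, apply_C_mul, apply_C_mul, h2] at this
    linarith
  have := discrim_le_zero hquad
  rw [discrim] at this
  linarith

theorem abs_apply_X_pow_le {ρ : ℝ} (hρ : 0 ≤ ρ) (hmom : ∀ n, Λ (X ^ (2 * n)) ≤ ρ ^ (2 * n))
    (k : ℕ) : |Λ (X ^ k)| ≤ ρ ^ k := by
  have heven : ∀ n, 0 ≤ Λ (X ^ (2 * n)) := fun n => by simpa [← pow_mul'] using hΛ (X ^ n)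
  obtain ⟨n, rfl | rfl⟩ := k.even_or_odd'
  · exact (abs_of_nonneg (heven n)).trans_le (hmom n)
  -- odd moments are controlled by their even neighbours through Cauchy–Schwarz
  · refine abs_le_of_sq_le_sq ?_ (by positivity)
    have hcs := apply_mul_sq_le hΛ (X ^ n) (X ^ (n + 1))
    rw [← pow_add, ← pow_mul', ← pow_mul', show n + (n + 1) = 2 * n + 1 by ring] at hcs
    calc Λ (X ^ (2 * n + 1)) ^ 2 ≤ Λ (X ^ (2 * n)) * Λ (X ^ (2 * (n + 1))) := hcs
      _ ≤ ρ ^ (2 * n) * ρ ^ (2 * (n + 1)) :=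
          mul_le_mul (hmom n) (hmom _) (heven _) (by positivity)
      _ = (ρ ^ (2 * n + 1)) ^ 2 := by ring

theorem abs_apply_X_pow_mul_le {ρ : ℝ} (hρ : 0 ≤ ρ)
    (hmom : ∀ n, Λ (X ^ (2 * n)) ≤ ρ ^ (2 * n)) (k : ℕ) (q : ℝ[X]) :
    |Λ (X ^ k * q)| ≤ (∑ i ∈ Finset.range (q.natDegree + 1), |q.coeff i| * ρ ^ i) * ρ ^ k := by
  conv_lhs => rw [q.as_sum_range_C_mul_X_pow]
  rw [mul_sum, map_sum, sum_mul]
  refine (abs_sum_le_sum_abs _ _).trans (sum_le_sum fun i _ => ?_)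
  rw [mul_left_comm, ← pow_add, apply_C_mul, abs_mul, mul_assoc, ← pow_add, add_comm i]
  exact mul_le_mul_of_nonneg_left (abs_apply_X_pow_le hΛ hρ hmom _) (abs_nonneg _)

theorem apply_X_sq_mul_le {ρ : ℝ} (hρ : 0 < ρ) (hmom : ∀ n, Λ (X ^ (2 * n)) ≤ ρ ^ (2 * n))
    (q : ℝ[X]) : Λ (X ^ 2 * q ^ 2) ≤ ρ ^ 2 * Λ (q ^ 2) := by
  set r : ℕ → ℝ := fun m => Λ (X ^ (2 * m) * q ^ 2)
  have hsq : ∀ m, X ^ (2 * m) * q ^ 2 = (X ^ m * q) ^ 2 := fun m => by ring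
  have hlog : ∀ m, r (m + 1) ^ 2 ≤ r m * r (m + 2) := fun m => by
    have hmul : X ^ (2 * (m + 1)) * q ^ 2 = (X ^ m * q) * (X ^ (m + 2) * q) := by ring
    simp only [r]
    rw [hmul, hsq, hsq]
    exact apply_mul_sq_le hΛ _ _
  have hgrowth : ∀ m, r m ≤ (∑ i ∈ Finset.range ((q ^ 2).natDegree + 1),
      |(q ^ 2).coeff i| * ρ ^ i) * (ρ ^ 2) ^ m := fun m => by
    rw [← pow_mul]
    exact (le_abs_self _).trans (abs_apply_X_pow_mul_le hΛ hρ.le hmom _ _)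
  have h := le_mul_of_sq_le_mul_of_le_mul_pow (pow_pos hρ 2)
    (fun m => by simp only [r]; rw [hsq]; exact hΛ _) hlog hgrowth
  simpa [r] using h

end LinearMap

section Jacobi

variable (b : ℕ → ℝ)

theorem moment_eq_iterate_single (n : ℕ) :
    moment b n = (jacobiOp b)^[n] (Pi.single 0 1) 0 := by
  have hδ : (fun k : ℕ => if k = 0 then (1 : ℝ) else 0) = Pi.single 0 1 := by
    funext k
    by_cases hk : k = 0 <;> simp [hk]
  rw [moment, hδ]

theorem jacobiOp_apply_eq_zero {f : ℕ → ℝ} {N : ℕ} (hf : ∀ j, N ≤ j → f j = 0) {j : ℕ}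
    (hj : N + 1 ≤ j) : jacobiOp b f j = 0 := by
  simp [jacobiOp, hf (j + 1) (by omega), hf (j - 1) (by omega)]

theorem iterate_jacobiOp_apply_eq_zero {f : ℕ → ℝ} {N : ℕ} (hf : ∀ j, N ≤ j → f j = 0)
    (n : ℕ) : ∀ j, N + n ≤ j → (jacobiOp b)^[n] f j = 0 := by
  induction n with
  | zero => simpa using hf
  | succ n ih =>
    intro j hj
    rw [Function.iterate_succ_apply']
    exact jacobiOp_apply_eq_zero b ih (by omega)

theorem single_zero_apply_eq_zero : ∀ j, 1 ≤ j → (Pi.single 0 1 : ℕ → ℝ) j = 0 :=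
  fun _ hj => Pi.single_eq_of_ne (by omega) _

theorem iterate_jacobiOp_single_self (n : ℕ) :
    (jacobiOp b)^[n] (Pi.single 0 1) n = ∏ i ∈ range n, b i := by
  induction n with
  | zero => simp
  | succ n ih =>
    rw [Function.iterate_succ_apply', jacobiOp,
      iterate_jacobiOp_apply_eq_zero b single_zero_apply_eq_zero n (n + 1 + 1) (by omega),
      if_neg n.succ_ne_zero, Nat.add_sub_cancel, ih, prod_range_succ]
    ring

theorem abs_iterate_jacobiOp_apply_le {B c : ℝ} (hB : ∀ n, |b n| ≤ B) {f : ℕ → ℝ}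
    (hf : ∀ j, |f j| ≤ c) (n k : ℕ) : |(jacobiOp b)^[n] f k| ≤ (2 * B) ^ n * c := by
  induction n generalizing k with
  | zero => simpa using hf k
  | succ n ih =>
    have hterm : ∀ i j, |b i * (jacobiOp b)^[n] f j| ≤ B * ((2 * B) ^ n * c) := fun i j => by
      rw [abs_mul]
      exact mul_le_mul (hB i) (ih j) (abs_nonneg _) ((abs_nonneg _).trans (hB i))
    rw [Function.iterate_succ_apply', jacobiOp]
    refine (abs_add_le _ _).trans ?_
    have hif : |(if k = 0 then 0 else b (k - 1) * (jacobiOp b)^[n] f (k - 1))|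
        ≤ B * ((2 * B) ^ n * c) := by
      split_ifs
      · simpa using (abs_nonneg _).trans (hterm 0 0)
      · exact hterm _ _
    linarith [hterm k (k + 1), show (2 * B) ^ (n + 1) * c = 2 * (B * ((2 * B) ^ n * c)) by ring]

theorem moment_le_pow {B : ℝ} (hB : ∀ n, |b n| ≤ B) (n : ℕ) : moment b n ≤ (2 * B) ^ n := by
  rw [moment_eq_iterate_single]
  have hsingle : ∀ j, |(Pi.single 0 1 : ℕ → ℝ) j| ≤ 1 := fun j => by
    by_cases hj : j = 0 <;> simp [hj]
  simpa using (le_abs_self _).trans (abs_iterate_jacobiOp_apply_le b hB hsingle n 0)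

theorem sum_range_succ_jacobiOp_mul_sub (f g : ℕ → ℝ) (M : ℕ) :
    ∑ j ∈ range (M + 1), (jacobiOp b f j * g j - f j * jacobiOp b g j)
      = b M * (f (M + 1) * g M - f M * g (M + 1)) := by
  induction M with
  | zero =>
    simp only [zero_add, range_one, jacobiOp, sum_singleton, ↓reduceIte, add_zero]
    ring
  | succ M ih =>
    rw [sum_range_succ, ih]
    simp only [jacobiOp, Nat.add_eq_zero_iff, one_ne_zero, and_false, ↓reduceIte,
      add_tsub_cancel_right]
    ring

theorem sum_jacobiOp_mul_eq {f g : ℕ → ℝ} {M : ℕ} (hf : f M = 0) (hg : g M = 0) :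
    ∑ j ∈ range M, jacobiOp b f j * g j = ∑ j ∈ range M, f j * jacobiOp b g j := by
  cases M with
  | zero => simp
  | succ M =>
    rw [← sub_eq_zero, ← sum_sub_distrib, sum_range_succ_jacobiOp_mul_sub, hf, hg]
    ring

theorem sum_iterate_jacobiOp_mul_eq {f g : ℕ → ℝ} {N M : ℕ} (hf : ∀ j, N ≤ j → f j = 0)
    (hg : ∀ j, N ≤ j → g j = 0) (n : ℕ) (hM : N + n ≤ M) :
    ∑ j ∈ range M, (jacobiOp b)^[n] f j * g j = ∑ j ∈ range M, f j * (jacobiOp b)^[n] g j := by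
  induction n generalizing N g with
  | zero => rfl
  | succ n ih =>
    rw [Function.iterate_succ_apply', Function.iterate_succ_apply,
      sum_jacobiOp_mul_eq b (iterate_jacobiOp_apply_eq_zero b hf n M (by omega)) (hg M (by omega))]
    exact ih (fun j hj => hf j (by omega)) (fun j hj => jacobiOp_apply_eq_zero b hg hj) (by omega)

noncomputable def jacobiLin : Module.End ℝ (ℕ → ℝ) where
  toFun := jacobiOp b
  map_add' f g := by
    funext n
    simp only [jacobiOp, Pi.add_apply]
    split_ifs <;> ring
  map_smul' c f := by
    funext n
    simp only [jacobiOp, Pi.smul_apply, smul_eq_mul, RingHom.id_apply]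
    split_ifs <;> ring

@[simp]
theorem coe_jacobiLin : ⇑(jacobiLin b) = jacobiOp b := rfl

theorem aeval_jacobiLin_apply {p : ℝ[X]} {N : ℕ} (hp : p.natDegree < N) (u : ℕ → ℝ) (j : ℕ) :
    aeval (jacobiLin b) p u j = ∑ i ∈ range N, p.coeff i * (jacobiOp b)^[i] u j := by
  simp only [aeval_eq_sum_range' hp, LinearMap.sum_apply, Finset.sum_apply,
    LinearMap.smul_apply, Module.End.pow_apply, Pi.smul_apply, smul_eq_mul, coe_jacobiLin]

theorem sum_aeval_jacobiLin_mul_eq (p : ℝ[X]) {u w : ℕ → ℝ} {N M : ℕ}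
    (hu : ∀ j, N ≤ j → u j = 0) (hw : ∀ j, N ≤ j → w j = 0) (hM : N + p.natDegree ≤ M) :
    ∑ j ∈ range M, aeval (jacobiLin b) p u j * w j
      = ∑ j ∈ range M, u j * aeval (jacobiLin b) p w j := by
  simp only [aeval_jacobiLin_apply b p.natDegree.lt_succ_self, sum_mul, mul_sum]
  rw [sum_comm, sum_comm (s := range M)]
  refine sum_congr rfl fun i hi => ?_
  simp only [mul_assoc, mul_left_comm (u _), ← mul_sum]
  rw [sum_iterate_jacobiOp_mul_eq b hu hw i (by rw [mem_range] at hi; omega)]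

theorem aeval_jacobiLin_single_apply_eq_zero {p : ℝ[X]} {j : ℕ} (hj : p.natDegree < j) :
    aeval (jacobiLin b) p (Pi.single 0 1) j = 0 := by
  rw [aeval_jacobiLin_apply b p.natDegree.lt_succ_self]
  refine sum_eq_zero fun i hi => ?_
  rw [mem_range] at hi
  rw [iterate_jacobiOp_apply_eq_zero b single_zero_apply_eq_zero i j (by omega), mul_zero]

theorem aeval_jacobiLin_single_apply_self {p : ℝ[X]} {n : ℕ} (hp : p.natDegree ≤ n) :
    aeval (jacobiLin b) p (Pi.single 0 1) n = p.coeff n * ∏ i ∈ range n, b i := by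
  rw [aeval_jacobiLin_apply b (Nat.lt_succ_of_le hp), sum_range_succ,
    iterate_jacobiOp_single_self, add_eq_right]
  refine sum_eq_zero fun i hi => ?_
  rw [mem_range] at hi
  rw [iterate_jacobiOp_apply_eq_zero b single_zero_apply_eq_zero i n (by omega), mul_zero]

/-- The functional `p ↦ ⟨p(J) δ₀, δ₀⟩`. -/
noncomputable def momentFunctional : ℝ[X] →ₗ[ℝ] ℝ :=
  (LinearMap.proj 0 ∘ₗ LinearMap.applyₗ (Pi.single 0 1)) ∘ₗ (aeval (jacobiLin b)).toLinearMap

theorem momentFunctional_apply (p : ℝ[X]) :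
    momentFunctional b p = aeval (jacobiLin b) p (Pi.single 0 1) 0 := rfl

theorem momentFunctional_X_pow (n : ℕ) : momentFunctional b (X ^ n) = moment b n := by
  rw [momentFunctional_apply, aeval_X_pow, Module.End.pow_apply, coe_jacobiLin,
    moment_eq_iterate_single]

theorem momentFunctional_one : momentFunctional b 1 = 1 := by
  simpa [moment] using momentFunctional_X_pow b 0

theorem momentFunctional_mul_eq_sum (p q : ℝ[X]) {M : ℕ} (hM : p.natDegree + q.natDegree < M) :
    momentFunctional b (p * q) = ∑ j ∈ range M,
      aeval (jacobiLin b) p (Pi.single 0 1) j * aeval (jacobiLin b) q (Pi.single 0 1) j := by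
  have hpick : ∀ g : ℕ → ℝ, g 0 = ∑ j ∈ range M, g j * (Pi.single 0 1 : ℕ → ℝ) j := fun g => by
    simp [Pi.single_apply, show 0 < M by omega]
  rw [momentFunctional_apply, map_mul, Module.End.mul_apply, hpick (aeval (jacobiLin b) p _),
    sum_aeval_jacobiLin_mul_eq b p (N := q.natDegree + 1)
      (fun j hj => aeval_jacobiLin_single_apply_eq_zero b (by omega))
      (fun j hj => single_zero_apply_eq_zero j (by omega)) (by omega)]
  simp only [mul_comm]

theorem sq_coeff_mul_prod_le_momentFunctional {p : ℝ[X]} {n : ℕ} (hp : p.natDegree ≤ n) :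
    (p.coeff n * ∏ i ∈ range n, b i) ^ 2 ≤ momentFunctional b (p ^ 2) := by
  rw [sq p, momentFunctional_mul_eq_sum b p p (M := 2 * n + 1) (by omega),
    ← aeval_jacobiLin_single_apply_self b hp, sq]
  exact single_le_sum (f := fun j => _ * _) (fun j _ => mul_self_nonneg _)
    (mem_range.2 (by omega))

theorem momentFunctional_sq_nonneg (p : ℝ[X]) : 0 ≤ momentFunctional b (p ^ 2) :=
  (sq_nonneg _).trans (sq_coeff_mul_prod_le_momentFunctional b le_rfl)

end Jacobi

section Moments

variable {b : ℕ → ℝ}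

theorem moment_two_mul_pos (hb : ∀ n, 0 < b n) (n : ℕ) : 0 < moment b (2 * n) := by
  have h := sq_coeff_mul_prod_le_momentFunctional b (natDegree_X_pow_le (R := ℝ) n)
  rw [coeff_X_pow_self, one_mul, ← pow_mul', momentFunctional_X_pow] at h
  exact (pow_pos (prod_pos fun i _ => hb i) 2).trans_le h

theorem moment_two_mul_sq_le (n : ℕ) :
    moment b (2 * (n + 1)) ^ 2 ≤ moment b (2 * n) * moment b (2 * (n + 2)) := by
  have h := LinearMap.apply_mul_sq_le (momentFunctional_sq_nonneg b) (X ^ n) (X ^ (n + 2))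
  rwa [← pow_add, ← pow_mul', ← pow_mul', show n + (n + 2) = 2 * (n + 1) by ring,
    momentFunctional_X_pow, momentFunctional_X_pow, momentFunctional_X_pow] at h

theorem prod_sq_le_of_moment_le {L : ℝ} (hL0 : 0 < L) (hL : ∀ n, moment b (2 * n) ≤ L ^ n)
    (n : ℕ) : (∏ i ∈ range (n + 1), b i) ^ 2 ≤ 4 * (L / 4) ^ (n + 1) := by
  have hmom : ∀ n, momentFunctional b (X ^ (2 * n)) ≤ √L ^ (2 * n) := fun n => by
    rw [momentFunctional_X_pow, pow_mul, Real.sq_sqrt hL0.le]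
    exact hL n
  have hnorm : ∀ q, momentFunctional b (X ^ 2 * q ^ 2) ≤ L * momentFunctional b (q ^ 2) :=
    fun q => by
      simpa [Real.sq_sqrt hL0.le] using LinearMap.apply_X_sq_mul_le
        (momentFunctional_sq_nonneg b) (Real.sqrt_pos.2 hL0) hmom q
  calc (∏ i ∈ range (n + 1), b i) ^ 2
      = ((dickson 1 (L / 4) (n + 1)).coeff (n + 1) * ∏ i ∈ range (n + 1), b i) ^ 2 := by
        rw [coeff_dickson_add_one, one_mul]
    _ ≤ momentFunctional b (dickson 1 (L / 4) (n + 1) ^ 2) :=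
        sq_coeff_mul_prod_le_momentFunctional b (natDegree_dickson_le _ _ _)
    _ ≤ 4 * (L / 4) ^ (n + 1) :=
        LinearMap.apply_dickson_sq_le (momentFunctional_one b) hnorm n

theorem le_rpow_moment_div_prod_sq (hb : ∀ n, 0 < b n) {L : ℝ} (hL0 : 0 < L)
    (hL : ∀ n, moment b (2 * n) ≤ L ^ n) {n : ℕ} (hn : n ≠ 0) :
    4 / L * (moment b (2 * n) ^ (n : ℝ)⁻¹ / 4 ^ (n : ℝ)⁻¹)
      ≤ (moment b (2 * n) / ∏ i ∈ range n, b i ^ 2) ^ (n : ℝ)⁻¹ := by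
  obtain ⟨m, rfl⟩ := Nat.exists_eq_succ_of_ne_zero hn
  have hs := moment_two_mul_pos hb (m + 1)
  have hprod : 0 < ∏ i ∈ range (m + 1), b i := prod_pos fun i _ => hb i
  rw [← Real.div_rpow hs.le zero_le_four,
    ← Real.pow_rpow_inv_natCast (x := 4 / L) (by positivity) hn,
    ← Real.mul_rpow (by positivity) (by positivity), prod_pow]
  refine Real.rpow_le_rpow (by positivity) ?_ (by positivity)
  calc (4 / L) ^ (m + 1) * (moment b (2 * (m + 1)) / 4)
      = moment b (2 * (m + 1)) / (4 * (L / 4) ^ (m + 1)) := by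
        rw [div_pow, div_pow]
        field_simp
    _ ≤ _ := div_le_div_of_nonneg_left hs.le (by positivity) (prod_sq_le_of_moment_le hL0 hL m)

end Moments

/-- for a bounded positive sequence `(b_n)`, with
`U_n = s_{2n}/(b_0²⋯b_{n-1}²)`, one has `liminf U_n^{1/n} ≥ 4`
(stated in `ℝ≥0∞` so that the `liminf` is well-behaved). -/
theorem stmt19 (b : ℕ → ℝ) (hb : ∀ n, 0 < b n) (hbd : BddAbove (Set.range b)) :
    (4 : ENNReal) ≤ Filter.liminf (fun n : ℕ =>
      ENNReal.ofReal
        ((moment b (2 * n) / ∏ i ∈ Finset.range n, (b i) ^ 2) ^ ((n : ℝ)⁻¹)))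
      Filter.atTop := by
  obtain ⟨B, hB⟩ := hbd
  have habs : ∀ n, |b n| ≤ B := fun n => (abs_of_pos (hb n)).trans_le (hB ⟨n, rfl⟩)
  obtain ⟨L, hL, hlim⟩ := exists_le_pow_tendsto_rpow_inv (moment_two_mul_pos hb)
    (by simp [moment]) moment_two_mul_sq_le (C := (2 * B) ^ 2)
    (fun n => by simpa [pow_mul] using moment_le_pow b habs (2 * n))
  have hL0 : 0 < L := by simpa using (moment_two_mul_pos hb 1).trans_le (hL 1)
  have hroot4 : Tendsto (fun n : ℕ => (4 : ℝ) ^ (n : ℝ)⁻¹) atTop (𝓝 1) := by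
    simpa using tendsto_const_nhds.rpow
      (tendsto_inv_atTop_zero.comp tendsto_natCast_atTop_atTop) (Or.inl four_ne_zero)
  have hlower : Tendsto (fun n : ℕ => ENNReal.ofReal
      (4 / L * (moment b (2 * n) ^ (n : ℝ)⁻¹ / 4 ^ (n : ℝ)⁻¹))) atTop (𝓝 4) := by
    have := ENNReal.tendsto_ofReal (((hlim.div hroot4 one_ne_zero).const_mul (4 / L)))
    rwa [div_one, div_mul_cancel₀ _ hL0.ne', ENNReal.ofReal_ofNat] at this
  rw [← hlower.liminf_eq]
  refine liminf_le_liminf ((eventually_ne_atTop 0).mono fun n hn => ?_)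
  exact ENNReal.ofReal_le_ofReal (le_rpow_moment_div_prod_sq hb hL0 hL hn)
end
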